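/- arXiv:2410.04619 — 7 statements merged into one kernel-verified Lean document; each statement's English description precedes it below -/
import Mathlib

section
/- For any contents X, any consumer rate allocation Λ, and any two nonnegative influencer rate vectors μ_infl and μ'_infl, the social welfare satisfies Φ(μ_infl, Λ, X) − Φ(μ'_infl, Λ, X) = U_infl(μ_infl|Λ,X) − U_infl(μ'_infl|Λ,X); that is, the game is a potential game with respect to unilateral deviations of the influencer, with potential function Φ. -/
open scoped Classical

noncomputable section

/-- Points of the `d`-dimensional Euclidean space. -/
abbrev E (d : ℕ) : Type := EuclideanSpace ℝ (Fin d)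

/-- An allocation `Ω = (μ_infl, Λ, X)`: `muI z` is the rate with which the
influencer follows producer `z`; `mu z y` is the rate with which consumer `y`
follows producer `z` directly; `muY y` is the rate with which consumer `y`
follows the influencer; `lam y` is the rate with which consumer `y` follows
outside sources; `X z` is the content topic created by producer `z`. -/
structure Alloc (d : ℕ) where
  muI : E d → ℝ
  mu  : E d → E d → ℝ
  muY : E d → ℝ
  lam : E d → ℝ
  X   : E d → E d

variable (d : ℕ)

/-- Admissibility of an allocation: nonnegative rates, the rate budget `M_infl`
of the influencer, the rate budget `M` of each consumer, and contents in `T`. -/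
def Admissible (T : Set (E d)) (C : Finset (E d)) (Minfl M : ℝ) (Ω : Alloc d) : Prop :=
  (∀ z ∈ C, 0 ≤ Ω.muI z) ∧ ((∑ z ∈ C, Ω.muI z) ≤ Minfl) ∧
  (∀ y ∈ C, (∀ z ∈ C.erase y, 0 ≤ Ω.mu z y) ∧ 0 ≤ Ω.muY y ∧ 0 ≤ Ω.lam y ∧
    ((∑ z ∈ C.erase y, Ω.mu z y) + Ω.muY y + Ω.lam y ≤ M)) ∧
  (∀ z ∈ C, Ω.X z ∈ T)

/-- `B(z|y) = q(x(z)|z) · p(x(z)|y)` where `p(x|y) = f(d(x,y))`, `q(x|y) = g(d(x,y))`. -/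
def Bfun (f g : ℝ → ℝ) (Ω : Alloc d) (z y : E d) : ℝ :=
  g (dist (Ω.X z) z) * f (dist (Ω.X z) y)

/-- The consumption utility `U_c(y|Ω)` of consumer `y`. -/
def Uc (f g I : ℝ → ℝ) (C : Finset (E d)) (rp r0 B0 : ℝ) (Ω : Alloc d) (y : E d) : ℝ :=
  rp * ∑ z ∈ C.erase y, Bfun d f g Ω z y * I (Ω.muI z) * I (Ω.muY y)
  + rp * ∑ z ∈ C.erase y, Bfun d f g Ω z y * I (Ω.mu z y)
  + r0 * B0 * I (Ω.lam y)

/-- The influencer utility `U_infl(μ_infl|Λ,X)`. -/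
def Uinfl (f g I : ℝ → ℝ) (C : Finset (E d)) (rp : ℝ) (Ω : Alloc d) : ℝ :=
  rp * ∑ z ∈ C, ∑ y ∈ C.erase z, Bfun d f g Ω z y * I (Ω.muI z) * I (Ω.muY y)

/-- The producer utility (social support) `U_p(z|Ω)` of producer `z`. -/
def Up (f g I : ℝ → ℝ) (C : Finset (E d)) (rp : ℝ) (Ω : Alloc d) (z : E d) : ℝ :=
  rp * ∑ y ∈ C.erase z, Bfun d f g Ω z y * I (Ω.muI z) * I (Ω.muY y)
  + rp * ∑ y ∈ C.erase z, Bfun d f g Ω z y * I (Ω.mu z y)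

/-- The social welfare `Φ(Ω) = Σ_{y∈C} U_c(y|Ω)`. -/
def Phi (f g I : ℝ → ℝ) (C : Finset (E d)) (rp r0 B0 : ℝ) (Ω : Alloc d) : ℝ :=
  ∑ y ∈ C, Uc d f g I C rp r0 B0 Ω y

/-- The allocation obtained from `Ω` when consumer `y` unilaterally deviates to
the rates `(mu', muY', lam')`. -/
def consDeviate (Ω : Alloc d) (y : E d) (mu' : E d → ℝ) (muY' lam' : ℝ) : Alloc d :=
  { Ω with
    mu := fun z w => if w = y then mu' z else Ω.mu z w,
    muY := Function.update Ω.muY y muY',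
    lam := Function.update Ω.lam y lam' }

/-- The influencer's rates are a best response: no feasible deviation of
`μ_infl` increases the influencer utility. -/
def InflBR (f g I : ℝ → ℝ) (C : Finset (E d)) (rp Minfl : ℝ) (Ω : Alloc d) : Prop :=
  ∀ μI' : E d → ℝ, (∀ z ∈ C, 0 ≤ μI' z) → ((∑ z ∈ C, μI' z) ≤ Minfl) →
    Uinfl d f g I C rp { Ω with muI := μI' } ≤ Uinfl d f g I C rp Ω

/-- Consumer `y`'s rates are a best response in the game with perfect
information: no feasible deviation increases the consumption utility. -/
def ConsBR (f g I : ℝ → ℝ) (C : Finset (E d)) (rp r0 B0 M : ℝ) (Ω : Alloc d) (y : E d) : Prop :=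
  ∀ (mu' : E d → ℝ) (muY' lam' : ℝ),
    (∀ z ∈ C.erase y, 0 ≤ mu' z) → 0 ≤ muY' → 0 ≤ lam' →
    ((∑ z ∈ C.erase y, mu' z) + muY' + lam' ≤ M) →
    Uc d f g I C rp r0 B0 (consDeviate d Ω y mu' muY' lam') y ≤ Uc d f g I C rp r0 B0 Ω y

/-- Producer `z`'s content is a best response: no deviation of the content
topic within `T` increases the producer's social support. -/
def ProdBR (f g I : ℝ → ℝ) (T : Set (E d)) (C : Finset (E d)) (rp : ℝ) (Ω : Alloc d) (z : E d) : Prop :=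
  ∀ x ∈ T, Up d f g I C rp { Ω with X := Function.update Ω.X z x } z ≤ Up d f g I C rp Ω z

/-- Nash equilibrium of the game with perfect information. -/
def NashPerfect (f g I : ℝ → ℝ) (T : Set (E d)) (C : Finset (E d))
    (rp r0 B0 Minfl M : ℝ) (Ω : Alloc d) : Prop :=
  Admissible d T C Minfl M Ω ∧
  InflBR d f g I C rp Minfl Ω ∧
  (∀ y ∈ C, ConsBR d f g I C rp r0 B0 M Ω y) ∧
  (∀ z ∈ C, ProdBR d f g I T C rp Ω z)

/-- Admissibility in the proxy game: in addition, consumers follow no producer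
directly. -/
def ProxyAdmissible (T : Set (E d)) (C : Finset (E d)) (Minfl M : ℝ) (Ω : Alloc d) : Prop :=
  Admissible d T C Minfl M Ω ∧ ∀ y ∈ C, ∀ z ∈ C.erase y, Ω.mu z y = 0

/-- Consumer `y`'s rates are a best response in the proxy game, where the
consumer may only follow the influencer and outside sources. -/
def ProxyConsBR (f g I : ℝ → ℝ) (C : Finset (E d)) (rp r0 B0 M : ℝ) (Ω : Alloc d) (y : E d) : Prop :=
  ∀ (muY' lam' : ℝ), 0 ≤ muY' → 0 ≤ lam' → muY' + lam' ≤ M →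
    Uc d f g I C rp r0 B0 (consDeviate d Ω y (fun _ => 0) muY' lam') y ≤
      Uc d f g I C rp r0 B0 Ω y

/-- Nash equilibrium of the proxy game. -/
def NashProxy (f g I : ℝ → ℝ) (T : Set (E d)) (C : Finset (E d))
    (rp r0 B0 Minfl M : ℝ) (Ω : Alloc d) : Prop :=
  ProxyAdmissible d T C Minfl M Ω ∧
  InflBR d f g I C rp Minfl Ω ∧
  (∀ y ∈ C, ProxyConsBR d f g I C rp r0 B0 M Ω y) ∧
  (∀ z ∈ C, ProdBR d f g I T C rp Ω z)

/-- Tie-break convention (Assumption 4): if no consumer follows the influencer,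
the influencer splits its rate budget uniformly. -/
def TieBreak (C : Finset (E d)) (Minfl : ℝ) (Ω : Alloc d) : Prop :=
  (∑ y ∈ C, Ω.muY y) = 0 → ∀ z ∈ C, Ω.muI z = Minfl / (C.card : ℝ)


private lemma sum_erase_swap {α : Type*} [DecidableEq α] (C : Finset α) (h : α → α → ℝ) :
    ∑ y ∈ C, ∑ z ∈ C.erase y, h z y = ∑ z ∈ C, ∑ y ∈ C.erase z, h z y := by
  rw [Finset.sum_congr rfl fun y hy => Finset.sum_erase_eq_sub (f := fun z => h z y) hy,
      Finset.sum_congr rfl fun z hz => Finset.sum_erase_eq_sub (f := fun y => h z y) hz,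
      Finset.sum_sub_distrib, Finset.sum_sub_distrib, Finset.sum_comm]

/-- For any contents `X`, any consumer rate allocation `Λ`,
and any two nonnegative influencer rate vectors `μ_infl` and `μ'_infl`, the
social welfare satisfies
`Φ(μ_infl, Λ, X) − Φ(μ'_infl, Λ, X) = U_infl(μ_infl|Λ,X) − U_infl(μ'_infl|Λ,X)`;
that is, the game is a potential game with respect to unilateral deviations of
the influencer, with potential function `Φ`. -/
theorem stmt3 (d : ℕ) (f g I : ℝ → ℝ)
    (hf_cont : ContinuousOn f (Set.Ici 0)) (hf_anti : StrictAntiOn f (Set.Ici 0))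
    (hf_rng : ∀ t ∈ Set.Ici (0 : ℝ), f t ∈ Set.Ioc (0 : ℝ) 1)
    (hg_cont : ContinuousOn g (Set.Ici 0)) (hg_anti : StrictAntiOn g (Set.Ici 0))
    (hg_rng : ∀ t ∈ Set.Ici (0 : ℝ), g t ∈ Set.Ioc (0 : ℝ) 1)
    (hI_diff : ContDiffOn ℝ 1 I (Set.Ici 0))
    (hI_mono : StrictMonoOn I (Set.Ici 0))
    (hI_conc : StrictConcaveOn ℝ (Set.Ici 0) I)
    (hI_zero : I 0 = 0)
    (hI_lim : Filter.Tendsto I Filter.atTop (nhds 1))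
    (T : Set (E d)) (hT_ne : T.Nonempty) (hT_conv : Convex ℝ T) (hT_comp : IsCompact T)
    (C : Finset (E d)) (hC : ↑C ⊆ T)
    (rp r0 B0 : ℝ) (hrp : 0 < rp) (hr0 : 0 < r0) (hB0 : 0 < B0)
    (Ω : Alloc d) (hX : ∀ z ∈ C, Ω.X z ∈ T)
    (hμI : ∀ z ∈ C, 0 ≤ Ω.muI z)
    (μI' : E d → ℝ) (hμI' : ∀ z ∈ C, 0 ≤ μI' z) :
    Phi d f g I C rp r0 B0 Ω - Phi d f g I C rp r0 B0 { Ω with muI := μI' } =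
      Uinfl d f g I C rp Ω - Uinfl d f g I C rp { Ω with muI := μI' } := by
  simp only [Phi, Uc, Uinfl, Bfun, Finset.sum_add_distrib, ← Finset.mul_sum]
  have h1 := sum_erase_swap C (fun z y =>
    g (dist (Ω.X z) z) * f (dist (Ω.X z) y) * I (Ω.muI z) * I (Ω.muY y))
  have h2 := sum_erase_swap C (fun z y =>
    g (dist (Ω.X z) z) * f (dist (Ω.X z) y) * I (μI' z) * I (Ω.muY y))
  rw [h1, h2]
  ring
end
end

section
/- For any influencer rate vector μ_infl, any consumer rate allocation Λ, any producer z₀ ∈ C, and any two contents x(z₀), x'(z₀) ∈ T (keeping the contents of all other producers fixed), the social welfare satisfies Φ(μ_infl, Λ, X) − Φ(μ_infl, Λ, X_{{z₀, x'(z₀)}}) = U_p(z₀|μ_infl, Λ, X) − U_p(z₀|μ_infl, Λ, X_{{z₀, x'(z₀)}}), where X_{{z₀, x'(z₀)}} denotes the content allocation with x(z₀) replaced by x'(z₀); that is, the game is a potential game with respect to unilateral deviations of any content producer, with potential function Φ. -/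
open scoped Classical

noncomputable section

variable (d : ℕ)

/-- For any influencer rate vector `μ_infl`, any consumer rate
allocation `Λ`, any producer `z₀ ∈ C`, and any two contents
`x(z₀), x'(z₀) ∈ T` (keeping the contents of all other producers fixed), the
social welfare satisfies
`Φ(μ_infl, Λ, X) − Φ(μ_infl, Λ, X_{{z₀,x'(z₀)}}) = U_p(z₀|μ_infl,Λ,X) − U_p(z₀|μ_infl,Λ,X_{{z₀,x'(z₀)}})`;
that is, the game is a potential game with respect to unilateral deviations of
any content producer, with potential function `Φ`. -/
theorem stmt5 (d : ℕ) (f g I : ℝ → ℝ)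
    (hf_cont : ContinuousOn f (Set.Ici 0)) (hf_anti : StrictAntiOn f (Set.Ici 0))
    (hf_rng : ∀ t ∈ Set.Ici (0 : ℝ), f t ∈ Set.Ioc (0 : ℝ) 1)
    (hg_cont : ContinuousOn g (Set.Ici 0)) (hg_anti : StrictAntiOn g (Set.Ici 0))
    (hg_rng : ∀ t ∈ Set.Ici (0 : ℝ), g t ∈ Set.Ioc (0 : ℝ) 1)
    (hI_diff : ContDiffOn ℝ 1 I (Set.Ici 0))
    (hI_mono : StrictMonoOn I (Set.Ici 0))
    (hI_conc : StrictConcaveOn ℝ (Set.Ici 0) I)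
    (hI_zero : I 0 = 0)
    (hI_lim : Filter.Tendsto I Filter.atTop (nhds 1))
    (T : Set (E d)) (hT_ne : T.Nonempty) (hT_conv : Convex ℝ T) (hT_comp : IsCompact T)
    (C : Finset (E d)) (hC : ↑C ⊆ T)
    (rp r0 B0 : ℝ) (hrp : 0 < rp) (hr0 : 0 < r0) (hB0 : 0 < B0)
    (Ω : Alloc d) (hX : ∀ z ∈ C, Ω.X z ∈ T)
    (z₀ : E d) (hz₀ : z₀ ∈ C) (x' : E d) (hx' : x' ∈ T) :
    Phi d f g I C rp r0 B0 Ω -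
        Phi d f g I C rp r0 B0 { Ω with X := Function.update Ω.X z₀ x' } =
      Up d f g I C rp Ω z₀ -
        Up d f g I C rp { Ω with X := Function.update Ω.X z₀ x' } z₀ := by
  classical
  set Ω' : Alloc d := { Ω with X := Function.update Ω.X z₀ x' } with hΩ'
  have hB : ∀ z : E d, z ≠ z₀ → ∀ y : E d,
      Bfun d f g Ω' z y = Bfun d f g Ω z y := by
    intro z hz y
    simp [Bfun, hΩ', Function.update_of_ne hz]
  have key : ∀ y ∈ C,
      Uc d f g I C rp r0 B0 Ω y - Uc d f g I C rp r0 B0 Ω' y =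
      (if y ∈ C.erase z₀ then
        rp * (Bfun d f g Ω z₀ y * I (Ω.muI z₀) * I (Ω.muY y)
              - Bfun d f g Ω' z₀ y * I (Ω.muI z₀) * I (Ω.muY y))
        + rp * (Bfun d f g Ω z₀ y * I (Ω.mu z₀ y)
              - Bfun d f g Ω' z₀ y * I (Ω.mu z₀ y))
       else 0) := by
    intro y hy
    by_cases hyz : y = z₀
    · subst hyz
      rw [if_neg (Finset.notMem_erase y C)]
      simp only [Uc]
      have h1 : ∀ z ∈ C.erase y, Bfun d f g Ω' z y * I (Ω'.muI z) * I (Ω'.muY y)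
          = Bfun d f g Ω z y * I (Ω.muI z) * I (Ω.muY y) := by
        intro z hz
        rw [hB z (Finset.ne_of_mem_erase hz) y]
      have h2 : ∀ z ∈ C.erase y, Bfun d f g Ω' z y * I (Ω'.mu z y)
          = Bfun d f g Ω z y * I (Ω.mu z y) := by
        intro z hz
        rw [hB z (Finset.ne_of_mem_erase hz) y]
      rw [Finset.sum_congr rfl h1, Finset.sum_congr rfl h2]
      have hlam : Ω'.lam y = Ω.lam y := rfl
      rw [hlam]
      ring
    · have hmem : y ∈ C.erase z₀ := Finset.mem_erase.mpr ⟨hyz, hy⟩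
      rw [if_pos hmem]
      have hz₀mem : z₀ ∈ C.erase y := Finset.mem_erase.mpr ⟨fun h => hyz h.symm, hz₀⟩
      simp only [Uc]
      have hlam : Ω'.lam y = Ω.lam y := rfl
      have e1 : ∑ z ∈ C.erase y, Bfun d f g Ω z y * I (Ω.muI z) * I (Ω.muY y)
          - ∑ z ∈ C.erase y, Bfun d f g Ω' z y * I (Ω'.muI z) * I (Ω'.muY y)
          = Bfun d f g Ω z₀ y * I (Ω.muI z₀) * I (Ω.muY y)
            - Bfun d f g Ω' z₀ y * I (Ω.muI z₀) * I (Ω.muY y) := by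
        rw [← Finset.sum_sub_distrib,
          Finset.sum_eq_single_of_mem z₀ hz₀mem (fun z hz hne => by
            rw [hB z hne y]
            show Bfun d f g Ω z y * I (Ω.muI z) * I (Ω.muY y)
              - Bfun d f g Ω z y * I (Ω.muI z) * I (Ω.muY y) = 0
            ring)]
      have e2 : ∑ z ∈ C.erase y, Bfun d f g Ω z y * I (Ω.mu z y)
          - ∑ z ∈ C.erase y, Bfun d f g Ω' z y * I (Ω'.mu z y)
          = Bfun d f g Ω z₀ y * I (Ω.mu z₀ y)
            - Bfun d f g Ω' z₀ y * I (Ω.mu z₀ y) := by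
        rw [← Finset.sum_sub_distrib,
          Finset.sum_eq_single_of_mem z₀ hz₀mem (fun z hz hne => by
            rw [hB z hne y]
            show Bfun d f g Ω z y * I (Ω.mu z y)
              - Bfun d f g Ω z y * I (Ω.mu z y) = 0
            ring)]
      rw [hlam]
      linear_combination rp * e1 + rp * e2
  have hPhi : Phi d f g I C rp r0 B0 Ω - Phi d f g I C rp r0 B0 Ω'
      = ∑ y ∈ C.erase z₀,
        (rp * (Bfun d f g Ω z₀ y * I (Ω.muI z₀) * I (Ω.muY y)
              - Bfun d f g Ω' z₀ y * I (Ω.muI z₀) * I (Ω.muY y))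
        + rp * (Bfun d f g Ω z₀ y * I (Ω.mu z₀ y)
              - Bfun d f g Ω' z₀ y * I (Ω.mu z₀ y))) := by
    unfold Phi
    rw [← Finset.sum_sub_distrib, Finset.sum_congr rfl key]
    rw [Finset.sum_ite_mem, Finset.inter_eq_right.mpr (Finset.erase_subset _ _)]
  rw [hPhi]
  have hmuI : Ω'.muI = Ω.muI := rfl
  have hmuY : Ω'.muY = Ω.muY := rfl
  have hmu : Ω'.mu = Ω.mu := rfl
  have hUp : Up d f g I C rp Ω z₀ - Up d f g I C rp Ω' z₀
      = ∑ y ∈ C.erase z₀,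
        (rp * (Bfun d f g Ω z₀ y * I (Ω.muI z₀) * I (Ω.muY y)
              - Bfun d f g Ω' z₀ y * I (Ω.muI z₀) * I (Ω.muY y))
        + rp * (Bfun d f g Ω z₀ y * I (Ω.mu z₀ y)
              - Bfun d f g Ω' z₀ y * I (Ω.mu z₀ y))) := by
    unfold Up
    rw [hmuI, hmuY, hmu]
    rw [Finset.mul_sum, Finset.mul_sum, Finset.mul_sum, Finset.mul_sum,
      ← Finset.sum_add_distrib, ← Finset.sum_add_distrib, ← Finset.sum_sub_distrib]
    exact Finset.sum_congr rfl fun y hy => by ring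
  rw [hUp]
end
end

section
/- There exists a Nash equilibrium Ω* = (μ*_infl, Λ*, X*) of the game with perfect information that maximizes the social welfare over all admissible allocations: Φ(Ω*) = max_{Ω ∈ S(M_infl,M)} Φ(Ω). In particular, every maximizer of Φ over S(M_infl, M) is a Nash equilibrium, and such a maximizer exists. -/
open scoped Classical

noncomputable section

variable (d : ℕ)

/-!
The welfare `Φ` is an exact potential of the game. A deviation of the influencer changes `Φ`
exactly as it changes `U_infl`, since the direct and outside terms of `Φ` do not involve
`μ_infl`; a deviation of consumer `y` changes only the summand `U_c(y)` of `Φ = Σ_y U_c(y)`;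
and regrouping the same double sum by producers gives `Φ = Σ_z U_p(z) + Σ_y r₀ B₀ I(λ(y))`,
in which `x(z)` enters only `U_p(z)`. Hence every maximizer of `Φ` over the admissible
allocations is a Nash equilibrium.

A maximizer exists because `Φ` and admissibility only read the coordinates of an allocation
indexed by `C`: resetting all other coordinates moves every admissible allocation, without
changing `Φ`, into a compact box, on which `Φ` is continuous.
-/

theorem Finset.sum_sum_erase_comm {ι M : Type*} [DecidableEq ι] [AddCommMonoid M]
    (s : Finset ι) (h : ι → ι → M) :
    ∑ y ∈ s, ∑ z ∈ s.erase y, h z y = ∑ z ∈ s, ∑ y ∈ s.erase z, h z y := by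
  refine Finset.sum_comm' fun y z => ?_
  simp only [Finset.mem_erase, ne_comm]
  tauto

theorem Finset.le_of_sum_le_sum_of_eqOn_erase {ι M : Type*} [DecidableEq ι] [AddCommMonoid M]
    [PartialOrder M] [IsOrderedCancelAddMonoid M] {s : Finset ι} {u v : ι → M} {j : ι}
    (hj : j ∈ s) (h : Set.EqOn v u ↑(s.erase j)) (hsum : ∑ i ∈ s, v i ≤ ∑ i ∈ s, u i) :
    v j ≤ u j := by
  rw [← Finset.add_sum_erase s v hj, ← Finset.add_sum_erase s u hj,
    Finset.sum_congr rfl h] at hsum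
  exact le_of_add_le_add_right hsum

section Welfare

variable {d : ℕ} {f g I : ℝ → ℝ} {T : Set (E d)} {C : Finset (E d)} {rp r0 B0 Minfl M : ℝ}

theorem Phi_eq_Uinfl_add (Ω : Alloc d) :
    Phi d f g I C rp r0 B0 Ω = Uinfl d f g I C rp Ω
      + ∑ y ∈ C, (rp * ∑ z ∈ C.erase y, Bfun d f g Ω z y * I (Ω.mu z y)
          + r0 * B0 * I (Ω.lam y)) := by
  rw [Phi, Uinfl, ← Finset.sum_sum_erase_comm C fun z y =>
    Bfun d f g Ω z y * I (Ω.muI z) * I (Ω.muY y), Finset.mul_sum, ← Finset.sum_add_distrib]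
  exact Finset.sum_congr rfl fun y _ => by rw [Uc]; ring

theorem Phi_eq_sum_Up_add (Ω : Alloc d) :
    Phi d f g I C rp r0 B0 Ω = ∑ z ∈ C, Up d f g I C rp Ω z + ∑ y ∈ C, r0 * B0 * I (Ω.lam y) := by
  simp only [Phi, Uc, Up, Finset.sum_add_distrib, ← Finset.mul_sum]
  rw [Finset.sum_sum_erase_comm C fun z y => Bfun d f g Ω z y * I (Ω.muI z) * I (Ω.muY y),
    Finset.sum_sum_erase_comm C fun z y => Bfun d f g Ω z y * I (Ω.mu z y)]

theorem Uc_consDeviate_of_ne (Ω : Alloc d) {y w : E d} (mu' : E d → ℝ) (muY' lam' : ℝ)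
    (hw : w ≠ y) :
    Uc d f g I C rp r0 B0 (consDeviate d Ω y mu' muY' lam') w = Uc d f g I C rp r0 B0 Ω w := by
  simp [Uc, Bfun, consDeviate, Function.update_of_ne hw, if_neg hw]

theorem Up_update_X_of_ne (Ω : Alloc d) {z w : E d} (x : E d) (hw : w ≠ z) :
    Up d f g I C rp { Ω with X := Function.update Ω.X z x } w = Up d f g I C rp Ω w := by
  simp [Up, Bfun, Function.update_of_ne hw]

theorem Admissible.consDeviate {Ω : Alloc d} (hΩ : Admissible d T C Minfl M Ω) {y : E d} (hy : y ∈ C)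
    {mu' : E d → ℝ} {muY' lam' : ℝ} (hmu' : ∀ z ∈ C.erase y, 0 ≤ mu' z) (hmuY' : 0 ≤ muY')
    (hlam' : 0 ≤ lam') (hbudget : (∑ z ∈ C.erase y, mu' z) + muY' + lam' ≤ M) :
    Admissible d T C Minfl M (consDeviate d Ω y mu' muY' lam') := by
  refine ⟨hΩ.1, hΩ.2.1, fun w hw => ?_, hΩ.2.2.2⟩
  by_cases hwy : w = y
  · subst hwy
    simp only [_root_.consDeviate, if_true, Function.update_self]
    exact ⟨hmu', hmuY', hlam', hbudget⟩
  · simpa [_root_.consDeviate, if_neg hwy, Function.update_of_ne hwy] using hΩ.2.2.1 w hw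

theorem Admissible.update_X {Ω : Alloc d} (hΩ : Admissible d T C Minfl M Ω) {z x : E d} (hx : x ∈ T) :
    Admissible d T C Minfl M { Ω with X := Function.update Ω.X z x } := by
  refine ⟨hΩ.1, hΩ.2.1, hΩ.2.2.1, fun w hw => ?_⟩
  by_cases hwz : w = z
  · simpa [hwz] using hx
  · simpa [Function.update_of_ne hwz] using hΩ.2.2.2 w hw

variable {Ω : Alloc d} (hΩ : Admissible d T C Minfl M Ω)
  (hmax : ∀ Ω' : Alloc d, Admissible d T C Minfl M Ω' →
    Phi d f g I C rp r0 B0 Ω' ≤ Phi d f g I C rp r0 B0 Ω)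
include hΩ hmax

theorem inflBR_of_forall_Phi_le : InflBR d f g I C rp Minfl Ω := by
  intro μI' hμI' hbudget
  have hle := hmax { Ω with muI := μI' } ⟨hμI', hbudget, hΩ.2.2⟩
  rw [Phi_eq_Uinfl_add, Phi_eq_Uinfl_add] at hle
  exact le_of_add_le_add_right hle

theorem consBR_of_forall_Phi_le {y : E d} (hy : y ∈ C) : ConsBR d f g I C rp r0 B0 M Ω y :=
  fun _ _ _ hmu' hmuY' hlam' hbudget =>
    Finset.le_of_sum_le_sum_of_eqOn_erase hy
      (fun _ hw => Uc_consDeviate_of_ne Ω _ _ _ (Finset.ne_of_mem_erase hw))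
      (hmax _ (hΩ.consDeviate hy hmu' hmuY' hlam' hbudget))

theorem prodBR_of_forall_Phi_le {z : E d} (hz : z ∈ C) : ProdBR d f g I T C rp Ω z := by
  intro x hx
  have hle := hmax _ (hΩ.update_X (z := z) hx)
  rw [Phi_eq_sum_Up_add, Phi_eq_sum_Up_add] at hle
  exact Finset.le_of_sum_le_sum_of_eqOn_erase hz
    (fun _ hw => Up_update_X_of_ne Ω x (Finset.ne_of_mem_erase hw)) (le_of_add_le_add_right hle)

theorem nashPerfect_of_forall_Phi_le : NashPerfect d f g I T C rp r0 B0 Minfl M Ω :=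
  ⟨hΩ, inflBR_of_forall_Phi_le hΩ hmax, fun _ hy => consBR_of_forall_Phi_le hΩ hmax hy,
    fun _ hz => prodBR_of_forall_Phi_le hΩ hmax hz⟩

end Welfare

namespace Alloc

variable {d : ℕ}

def toProd (Ω : Alloc d) :
    (E d → ℝ) × (E d → E d → ℝ) × (E d → ℝ) × (E d → ℝ) × (E d → E d) :=
  (Ω.muI, Ω.mu, Ω.muY, Ω.lam, Ω.X)

instance : TopologicalSpace (Alloc d) := TopologicalSpace.induced toProd inferInstance

theorem isInducing_toProd : Topology.IsInducing (toProd (d := d)) := ⟨rfl⟩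

theorem surjective_toProd : Function.Surjective (toProd (d := d)) :=
  fun p => ⟨⟨p.1, p.2.1, p.2.2.1, p.2.2.2.1, p.2.2.2.2⟩, rfl⟩

theorem continuous_muI (z : E d) : Continuous fun Ω : Alloc d => Ω.muI z :=
  (continuous_apply z).comp (continuous_fst.comp isInducing_toProd.continuous)

theorem continuous_mu (z y : E d) : Continuous fun Ω : Alloc d => Ω.mu z y :=
  (continuous_apply y).comp <| (continuous_apply z).comp <|
    continuous_fst.comp <| continuous_snd.comp isInducing_toProd.continuous

theorem continuous_muY (y : E d) : Continuous fun Ω : Alloc d => Ω.muY y :=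
  (continuous_apply y).comp <| continuous_fst.comp <| continuous_snd.comp <|
    continuous_snd.comp isInducing_toProd.continuous

theorem continuous_lam (y : E d) : Continuous fun Ω : Alloc d => Ω.lam y :=
  (continuous_apply y).comp <| continuous_fst.comp <| continuous_snd.comp <|
    continuous_snd.comp <| continuous_snd.comp isInducing_toProd.continuous

theorem continuous_X (z : E d) : Continuous fun Ω : Alloc d => Ω.X z :=
  (continuous_apply z).comp <| continuous_snd.comp <| continuous_snd.comp <|
    continuous_snd.comp <| continuous_snd.comp isInducing_toProd.continuous

def box (T : Set (E d)) (Minfl M : ℝ) : Set (Alloc d) :=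
  {Ω | (∀ z, Ω.muI z ∈ Set.Icc 0 Minfl) ∧ (∀ z y, Ω.mu z y ∈ Set.Icc 0 M) ∧
    (∀ y, Ω.muY y ∈ Set.Icc 0 M) ∧ (∀ y, Ω.lam y ∈ Set.Icc 0 M) ∧ ∀ z, Ω.X z ∈ T}

theorem isCompact_box {T : Set (E d)} (hT : IsCompact T) (Minfl M : ℝ) :
    IsCompact (box T Minfl M) := by
  have hK := (isCompact_univ_pi fun _ : E d => isCompact_Icc (a := 0) (b := Minfl)).prod <|
    (isCompact_univ_pi fun _ : E d => isCompact_univ_pi fun _ : E d =>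
      isCompact_Icc (a := 0) (b := M)).prod <|
    (isCompact_univ_pi fun _ : E d => isCompact_Icc (a := 0) (b := M)).prod <|
    (isCompact_univ_pi fun _ : E d => isCompact_Icc (a := 0) (b := M)).prod <|
    isCompact_univ_pi fun _ : E d => hT
  convert isInducing_toProd.isCompact_preimage
    (by rw [surjective_toProd.range_eq]; exact isClosed_univ) hK using 1
  ext Ω
  simp only [box, toProd, Set.mem_preimage, Set.mem_prod, Set.mem_univ_pi, Set.mem_ofPred_eq]

/-- Resets the coordinates of `Ω` that neither `Phi` nor `Admissible` reads to `0`, resp. `x₀`. -/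
def trim (C : Finset (E d)) (x₀ : E d) (Ω : Alloc d) : Alloc d where
  muI z := if z ∈ C then Ω.muI z else 0
  mu z y := if y ∈ C ∧ z ∈ C.erase y then Ω.mu z y else 0
  muY y := if y ∈ C then Ω.muY y else 0
  lam y := if y ∈ C then Ω.lam y else 0
  X z := if z ∈ C then Ω.X z else x₀

end Alloc

section Existence

variable {d : ℕ} {f g I : ℝ → ℝ} {T : Set (E d)} {C : Finset (E d)} {rp r0 B0 Minfl M : ℝ}

open Alloc

theorem Phi_trim (x₀ : E d) (Ω : Alloc d) :
    Phi d f g I C rp r0 B0 (Ω.trim C x₀) = Phi d f g I C rp r0 B0 Ω := by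
  refine Finset.sum_congr rfl fun y hy => ?_
  have hC : ∀ z ∈ C.erase y, z ∈ C := fun _ => Finset.mem_of_mem_erase
  simp +contextual only [Uc, Bfun, Alloc.trim, hy, hC, and_self, if_true]

theorem Admissible.trim {Ω : Alloc d} (hΩ : Admissible d T C Minfl M Ω) (x₀ : E d) :
    Admissible d T C Minfl M (Ω.trim C x₀) := by
  have hC : ∀ y z, z ∈ C.erase y → z ∈ C := fun _ _ => Finset.mem_of_mem_erase
  simpa +contextual only [Admissible, Alloc.trim, hC, and_self, if_true] using hΩ

theorem Admissible.trim_mem_box {Ω : Alloc d} (hΩ : Admissible d T C Minfl M Ω) {x₀ : E d}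
    (hx₀ : x₀ ∈ T) (hMinfl : 0 ≤ Minfl) (hM : 0 ≤ M) : Ω.trim C x₀ ∈ box T Minfl M := by
  obtain ⟨hmuI, hbudgetI, hcons, hX⟩ := hΩ
  refine ⟨fun z => ?_, fun z y => ?_, fun y => ?_, fun y => ?_, fun z => ?_⟩ <;>
    simp only [Alloc.trim] <;> split_ifs with h
  · exact ⟨hmuI z h, (Finset.single_le_sum hmuI h).trans hbudgetI⟩
  · exact Set.left_mem_Icc.2 hMinfl
  · obtain ⟨hmu, hmuY, hlam, hbudget⟩ := hcons y h.1
    exact ⟨hmu z h.2, by linarith [Finset.single_le_sum hmu h.2]⟩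
  · exact Set.left_mem_Icc.2 hM
  · obtain ⟨hmu, hmuY, hlam, hbudget⟩ := hcons y h
    exact ⟨hmuY, by linarith [Finset.sum_nonneg hmu]⟩
  · exact Set.left_mem_Icc.2 hM
  · obtain ⟨hmu, hmuY, hlam, hbudget⟩ := hcons y h
    exact ⟨hlam, by linarith [Finset.sum_nonneg hmu]⟩
  · exact Set.left_mem_Icc.2 hM
  · exact hX z h
  · exact hx₀

theorem isClosed_setOf_admissible (hT : IsClosed T) :
    IsClosed {Ω : Alloc d | Admissible d T C Minfl M Ω} := by
  simp only [Admissible, Set.ofPred_and, Set.ofPred_forall]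
  refine (isClosed_biInter fun z _ => isClosed_le continuous_const (continuous_muI z)).inter <|
    (isClosed_le (continuous_finsetSum _ fun z _ => continuous_muI z) continuous_const).inter <|
    (isClosed_biInter fun y _ => ?_).inter <|
    isClosed_biInter fun z _ => hT.preimage (continuous_X z)
  refine (isClosed_biInter fun z _ => isClosed_le continuous_const (continuous_mu z y)).inter <|
    (isClosed_le continuous_const (continuous_muY y)).inter <|
    (isClosed_le continuous_const (continuous_lam y)).inter <| isClosed_le ?_ continuous_const
  exact ((continuous_finsetSum _ fun z _ => continuous_mu z y).add (continuous_muY y)).add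
    (continuous_lam y)

theorem continuousOn_Phi (hf : ContinuousOn f (Set.Ici 0)) (hg : ContinuousOn g (Set.Ici 0))
    (hI : ContinuousOn I (Set.Ici 0)) :
    ContinuousOn (Phi d f g I C rp r0 B0) (box T Minfl M) := by
  have hcomp {φ : ℝ → ℝ} (hφ : ContinuousOn φ (Set.Ici 0)) {u : Alloc d → ℝ} (hu : Continuous u)
      (hnonneg : ∀ Ω ∈ box T Minfl M, 0 ≤ u Ω) : ContinuousOn (fun Ω => φ (u Ω)) (box T Minfl M) :=
    hφ.comp hu.continuousOn hnonneg
  have hB (z y : E d) : ContinuousOn (fun Ω : Alloc d => Bfun d f g Ω z y) (box T Minfl M) :=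
    (hcomp hg ((continuous_X z).dist continuous_const) fun _ _ => dist_nonneg).mul
      (hcomp hf ((continuous_X z).dist continuous_const) fun _ _ => dist_nonneg)
  have hmuI (z : E d) := hcomp hI (continuous_muI z) fun _ hΩ => (hΩ.1 z).1
  have hmu (z y : E d) := hcomp hI (continuous_mu z y) fun _ hΩ => (hΩ.2.1 z y).1
  have hmuY (y : E d) := hcomp hI (continuous_muY y) fun _ hΩ => (hΩ.2.2.1 y).1
  have hlam (y : E d) := hcomp hI (continuous_lam y) fun _ hΩ => (hΩ.2.2.2.1 y).1
  exact continuousOn_finsetSum _ fun y _ =>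
    ((continuousOn_const.mul <| continuousOn_finsetSum _ fun z _ =>
        ((hB z y).mul (hmuI z)).mul (hmuY y)).add
      (continuousOn_const.mul <| continuousOn_finsetSum _ fun z _ => (hB z y).mul (hmu z y))).add
    (continuousOn_const.mul (hlam y))

theorem exists_admissible_forall_Phi_le (hf : ContinuousOn f (Set.Ici 0))
    (hg : ContinuousOn g (Set.Ici 0)) (hI : ContinuousOn I (Set.Ici 0)) (hT_ne : T.Nonempty)
    (hT : IsCompact T) (hMinfl : 0 ≤ Minfl) (hM : 0 ≤ M) :
    ∃ Ω : Alloc d, Admissible d T C Minfl M Ω ∧ ∀ Ω' : Alloc d, Admissible d T C Minfl M Ω' →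
      Phi d f g I C rp r0 B0 Ω' ≤ Phi d f g I C rp r0 B0 Ω := by
  obtain ⟨x₀, hx₀⟩ := hT_ne
  have hK : IsCompact (box T Minfl M ∩ {Ω | Admissible d T C Minfl M Ω}) :=
    (isCompact_box hT Minfl M).inter_right (isClosed_setOf_admissible hT.isClosed)
  have hzero : Admissible d T C Minfl M ⟨0, 0, 0, 0, fun _ => x₀⟩ :=
    ⟨fun _ _ => le_rfl, by simpa using hMinfl,
      fun _ _ => ⟨fun _ _ => le_rfl, le_rfl, le_rfl, by simpa using hM⟩, fun _ _ => hx₀⟩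
  obtain ⟨Ω, hΩ, hmax⟩ := hK.exists_isMaxOn ⟨_, hzero.trim_mem_box hx₀ hMinfl hM, hzero.trim x₀⟩
    ((continuousOn_Phi hf hg hI).mono Set.inter_subset_left)
  refine ⟨Ω, hΩ.2, fun Ω' hΩ' => ?_⟩
  rw [← Phi_trim x₀ Ω']
  exact hmax ⟨hΩ'.trim_mem_box hx₀ hMinfl hM, hΩ'.trim x₀⟩

end Existence

theorem stmt7_general (d : ℕ) (f g I : ℝ → ℝ)
    (hf_cont : ContinuousOn f (Set.Ici 0))
    (hg_cont : ContinuousOn g (Set.Ici 0))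
    (hI_diff : ContDiffOn ℝ 1 I (Set.Ici 0))
    (T : Set (E d)) (hT_ne : T.Nonempty) (hT_comp : IsCompact T)
    (C : Finset (E d))
    (rp r0 B0 : ℝ)
    (Minfl M : ℝ) (hMinfl : 0 < Minfl) (hM : 0 < M) :
    (∃ Ω : Alloc d, NashPerfect d f g I T C rp r0 B0 Minfl M Ω ∧
        ∀ Ω' : Alloc d, Admissible d T C Minfl M Ω' →
          Phi d f g I C rp r0 B0 Ω' ≤ Phi d f g I C rp r0 B0 Ω) ∧
    (∀ Ω : Alloc d, Admissible d T C Minfl M Ω →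
        (∀ Ω' : Alloc d, Admissible d T C Minfl M Ω' →
          Phi d f g I C rp r0 B0 Ω' ≤ Phi d f g I C rp r0 B0 Ω) →
        NashPerfect d f g I T C rp r0 B0 Minfl M Ω) ∧
    (∃ Ω : Alloc d, Admissible d T C Minfl M Ω ∧
        ∀ Ω' : Alloc d, Admissible d T C Minfl M Ω' →
          Phi d f g I C rp r0 B0 Ω' ≤ Phi d f g I C rp r0 B0 Ω) := by
  obtain ⟨Ω, hΩ, hmax⟩ := exists_admissible_forall_Phi_le (C := C) (rp := rp) (r0 := r0)
    (B0 := B0) hf_cont hg_cont hI_diff.continuousOn hT_ne hT_comp hMinfl.le hM.le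
  exact ⟨⟨Ω, nashPerfect_of_forall_Phi_le hΩ hmax, hmax⟩,
    fun _ => nashPerfect_of_forall_Phi_le, ⟨Ω, hΩ, hmax⟩⟩

/-- **Proposition 2.** There exists a Nash equilibrium
`Ω* = (μ*_infl, Λ*, X*)` of the game with perfect information that maximizes
the social welfare over all admissible allocations:
`Φ(Ω*) = max_{Ω ∈ S(M_infl,M)} Φ(Ω)`.  In particular, every maximizer of `Φ`
over `S(M_infl, M)` is a Nash equilibrium, and such a maximizer exists. -/
theorem stmt7 (d : ℕ) (f g I : ℝ → ℝ)
    (hf_cont : ContinuousOn f (Set.Ici 0)) (hf_anti : StrictAntiOn f (Set.Ici 0))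
    (hf_rng : ∀ t ∈ Set.Ici (0 : ℝ), f t ∈ Set.Ioc (0 : ℝ) 1)
    (hg_cont : ContinuousOn g (Set.Ici 0)) (hg_anti : StrictAntiOn g (Set.Ici 0))
    (hg_rng : ∀ t ∈ Set.Ici (0 : ℝ), g t ∈ Set.Ioc (0 : ℝ) 1)
    (hI_diff : ContDiffOn ℝ 1 I (Set.Ici 0))
    (hI_mono : StrictMonoOn I (Set.Ici 0))
    (hI_conc : StrictConcaveOn ℝ (Set.Ici 0) I)
    (hI_zero : I 0 = 0)
    (hI_lim : Filter.Tendsto I Filter.atTop (nhds 1))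
    (T : Set (E d)) (hT_ne : T.Nonempty) (hT_conv : Convex ℝ T) (hT_comp : IsCompact T)
    (C : Finset (E d)) (hC : ↑C ⊆ T)
    (rp r0 B0 : ℝ) (hrp : 0 < rp) (hr0 : 0 < r0) (hB0 : 0 < B0)
    (Minfl M : ℝ) (hMinfl : 0 < Minfl) (hM : 0 < M) :
    (∃ Ω : Alloc d, NashPerfect d f g I T C rp r0 B0 Minfl M Ω ∧
        ∀ Ω' : Alloc d, Admissible d T C Minfl M Ω' →
          Phi d f g I C rp r0 B0 Ω' ≤ Phi d f g I C rp r0 B0 Ω) ∧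
    (∀ Ω : Alloc d, Admissible d T C Minfl M Ω →
        (∀ Ω' : Alloc d, Admissible d T C Minfl M Ω' →
          Phi d f g I C rp r0 B0 Ω' ≤ Phi d f g I C rp r0 B0 Ω) →
        NashPerfect d f g I T C rp r0 B0 Minfl M Ω) ∧
    (∃ Ω : Alloc d, Admissible d T C Minfl M Ω ∧
        ∀ Ω' : Alloc d, Admissible d T C Minfl M Ω' →
          Phi d f g I C rp r0 B0 Ω' ≤ Phi d f g I C rp r0 B0 Ω) :=
  stmt7_general d f g I hf_cont hg_cont hI_diff T hT_ne hT_comp C rp r0 B0 Minfl M hMinfl hM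
end
end

section
/- There exist a positive integer N₀ and a constant k_infl > 0 such that if N > N₀ and M_infl > N·k_infl, then the following is true: if Ω* = (μ*_infl, Λ*, X*) is a Nash equilibrium of the proxy game (with the tie-break convention that if Σ_{y∈C} μ*(y_infl|y) = 0 then μ*_infl(z) = M_infl/N for all z), then Σ_{y∈C} μ*(y_infl|y) > 0, i.e., the total rate with which consumers follow the influencer is positive. -/
open scoped Classical

noncomputable section

variable (d : ℕ)

/-- **Lemma 13.** There exist a positive integer `N₀` and a
constant `k_infl > 0` such that if `N > N₀` and `M_infl > N·k_infl`, then the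
following is true: if `Ω* = (μ*_infl, Λ*, X*)` is a Nash equilibrium of the
proxy game (with the tie-break convention that if `Σ_{y∈C} μ*(y_infl|y) = 0`
then `μ*_infl(z) = M_infl/N` for all `z`), then `Σ_{y∈C} μ*(y_infl|y) > 0`,
i.e. the total rate with which consumers follow the influencer is positive. -/
theorem stmt14 (d : ℕ) (f g I : ℝ → ℝ)
    (hf_cont : ContinuousOn f (Set.Ici 0)) (hf_anti : StrictAntiOn f (Set.Ici 0))
    (hf_rng : ∀ t ∈ Set.Ici (0 : ℝ), f t ∈ Set.Ioc (0 : ℝ) 1)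
    (hg_cont : ContinuousOn g (Set.Ici 0)) (hg_anti : StrictAntiOn g (Set.Ici 0))
    (hg_rng : ∀ t ∈ Set.Ici (0 : ℝ), g t ∈ Set.Ioc (0 : ℝ) 1)
    (hI_diff : ContDiffOn ℝ 1 I (Set.Ici 0))
    (hI_mono : StrictMonoOn I (Set.Ici 0))
    (hI_conc : StrictConcaveOn ℝ (Set.Ici 0) I)
    (hI_zero : I 0 = 0)
    (hI_lim : Filter.Tendsto I Filter.atTop (nhds 1))
    (T : Set (E d)) (hT_ne : T.Nonempty) (hT_conv : Convex ℝ T) (hT_comp : IsCompact T)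
    (rp r0 B0 : ℝ) (hrp : 0 < rp) (hr0 : 0 < r0) (hB0 : 0 < B0)
    (M : ℝ) (hM : 0 < M) :
    ∃ (N₀ : ℕ) (kinfl : ℝ), 0 < kinfl ∧
      ∀ C : Finset (E d), ↑C ⊆ T → N₀ < C.card →
        ∀ Minfl : ℝ, (C.card : ℝ) * kinfl < Minfl →
          ∀ Ω : Alloc d, NashProxy d f g I T C rp r0 B0 Minfl M Ω →
            TieBreak d C Minfl Ω →
            0 < ∑ y ∈ C, Ω.muY y := by
  have hbd := hT_comp.isBounded
  set D := Metric.diam T with hDdef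
  have hD0 : (0:ℝ) ≤ D := Metric.diam_nonneg
  have hfD : 0 < f D := (hf_rng D hD0).1
  have hgD : 0 < g D := (hg_rng D hD0).1
  have hI1 : 0 < I 1 := by
    have := hI_mono (Set.self_mem_Ici) (by norm_num : (1:ℝ) ∈ Set.Ici 0) one_pos
    linarith [hI_zero]
  have hIM : 0 < I M := by
    have := hI_mono (Set.self_mem_Ici) (Set.mem_Ici.mpr hM.le) hM
    linarith [hI_zero]
  set c := g D * f D with hcdef
  have hc0 : 0 < c := mul_pos hgD hfD
  set R := r0 * B0 / (rp * c * I 1) with hRdef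
  refine ⟨⌈R⌉₊ + 1, 1, one_pos, ?_⟩
  intro C hCT hN Minfl hMinfl Ω hNash hTie
  obtain ⟨⟨⟨hmuI0, hmuIsum, hcons, hX⟩, hmu0⟩, hIBR, hCBR, hPBR⟩ := hNash
  by_contra hcon
  push_neg at hcon
  have hmuYnn : ∀ y ∈ C, 0 ≤ Ω.muY y := fun y hy => (hcons y hy).2.1
  have hsum0 : (∑ y ∈ C, Ω.muY y) = 0 := le_antisymm hcon (Finset.sum_nonneg hmuYnn)
  have hmuYz : ∀ y ∈ C, Ω.muY y = 0 :=
    (Finset.sum_eq_zero_iff_of_nonneg hmuYnn).mp hsum0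
  have hTieb := hTie hsum0
  have hNpos : 0 < C.card := by omega
  have hNR : (0:ℝ) < C.card := by exact_mod_cast hNpos
  obtain ⟨y, hy⟩ := Finset.card_pos.mp hNpos
  have hyT : y ∈ T := hCT hy
  -- Minfl / N > 1
  have hMN : 1 < Minfl / (C.card : ℝ) := by
    rw [lt_div_iff₀ hNR]; linarith [hMinfl]
  -- the deviation
  have hBR := hCBR y hy M 0 hM.le le_rfl (by linarith)
  set Ω' := consDeviate d Ω y (fun _ => 0) M 0 with hΩ'
  -- value of the deviation utility
  have hUdev : Uc d f g I C rp r0 B0 Ω' y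
      = rp * ∑ z ∈ C.erase y, Bfun d f g Ω z y * I (Ω.muI z) * I M := by
    simp [Uc, hΩ', consDeviate, Bfun, hI_zero]
  -- per-term lower bound
  have hterm : ∀ z ∈ C.erase y,
      c * I 1 * I M ≤ Bfun d f g Ω z y * I (Ω.muI z) * I M := by
    intro z hz
    have hzC : z ∈ C := Finset.mem_of_mem_erase hz
    have hzT : z ∈ T := hCT hzC
    have hXz : Ω.X z ∈ T := hX z hzC
    have hd1 : dist (Ω.X z) z ≤ D := Metric.dist_le_diam_of_mem hbd hXz hzT
    have hd2 : dist (Ω.X z) y ≤ D := Metric.dist_le_diam_of_mem hbd hXz hyT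
    have hg1 : g D ≤ g (dist (Ω.X z) z) :=
      hg_anti.antitoneOn (Set.mem_Ici.mpr dist_nonneg) (Set.mem_Ici.mpr hD0) hd1
    have hf1 : f D ≤ f (dist (Ω.X z) y) :=
      hf_anti.antitoneOn (Set.mem_Ici.mpr dist_nonneg) (Set.mem_Ici.mpr hD0) hd2
    have hgpos : 0 < g (dist (Ω.X z) z) := (hg_rng _ (Set.mem_Ici.mpr dist_nonneg)).1
    have hB : c ≤ Bfun d f g Ω z y := by
      unfold Bfun
      exact mul_le_mul hg1 hf1 hfD.le hgpos.le
    have hImuI : I 1 ≤ I (Ω.muI z) := by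
      rw [hTieb z hzC]
      exact (hI_mono (by norm_num : (1:ℝ) ∈ Set.Ici 0)
        (Set.mem_Ici.mpr (by linarith : (0:ℝ) ≤ Minfl / (C.card:ℝ))) hMN).le
    have hBnn : (0:ℝ) ≤ Bfun d f g Ω z y := le_trans hc0.le hB
    have h1 : c * I 1 ≤ Bfun d f g Ω z y * I (Ω.muI z) :=
      mul_le_mul hB hImuI hI1.le hBnn
    exact mul_le_mul_of_nonneg_right h1 hIM.le
  have hcard : (C.erase y).card = C.card - 1 := Finset.card_erase_of_mem hy
  have hsumlb : ((C.card : ℝ) - 1) * (c * I 1 * I M)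
      ≤ ∑ z ∈ C.erase y, Bfun d f g Ω z y * I (Ω.muI z) * I M := by
    have := Finset.card_nsmul_le_sum (C.erase y) _ (c * I 1 * I M) hterm
    rw [nsmul_eq_mul, hcard] at this
    have hcast : ((C.card - 1 : ℕ) : ℝ) = (C.card : ℝ) - 1 := by
      push_cast [Nat.cast_sub hNpos]; ring
    rwa [hcast] at this
  -- value of the current utility
  have hmusum : (∑ z ∈ C.erase y, Ω.mu z y) = 0 :=
    Finset.sum_eq_zero (fun z hz => hmu0 y hy z hz)
  have hUcur : Uc d f g I C rp r0 B0 Ω y = r0 * B0 * I (Ω.lam y) := by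
    have h1 : ∑ z ∈ C.erase y, Bfun d f g Ω z y * I (Ω.mu z y) = 0 :=
      Finset.sum_eq_zero fun z hz => by rw [hmu0 y hy z hz, hI_zero, mul_zero]
    unfold Uc
    rw [h1, hmuYz y hy, hI_zero]
    simp
  have hlam : Ω.lam y ≤ M := by
    have := (hcons y hy).2.2.2
    rw [hmusum, hmuYz y hy] at this; linarith
  have hlam0 : 0 ≤ Ω.lam y := (hcons y hy).2.2.1
  have hIlam : I (Ω.lam y) ≤ I M :=
    hI_mono.monotoneOn (Set.mem_Ici.mpr hlam0) (Set.mem_Ici.mpr hM.le) hlam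
  -- numeric contradiction
  have hceil : R ≤ (⌈R⌉₊ : ℝ) := Nat.le_ceil R
  have hNgt : R < (C.card : ℝ) - 1 := by
    have : ((⌈R⌉₊ + 1 : ℕ) : ℝ) < C.card := by exact_mod_cast hN
    push_cast at this
    linarith
  have hkey : r0 * B0 < rp * c * I 1 * ((C.card : ℝ) - 1) := by
    have hpos : 0 < rp * c * I 1 := by positivity
    have := (div_lt_iff₀ hpos).mp (by rw [← hRdef]; linarith : r0 * B0 / (rp * c * I 1) < (C.card:ℝ) - 1)
    linarith
  have hfinal : r0 * B0 * I M < Uc d f g I C rp r0 B0 Ω' y := by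
    rw [hUdev]
    calc r0 * B0 * I M < rp * c * I 1 * ((C.card:ℝ) - 1) * I M := by nlinarith
      _ = rp * (((C.card:ℝ) - 1) * (c * I 1 * I M)) := by ring
      _ ≤ rp * ∑ z ∈ C.erase y, Bfun d f g Ω z y * I (Ω.muI z) * I M :=
          mul_le_mul_of_nonneg_left hsumlb hrp.le
  rw [hUcur] at hBR
  have : r0 * B0 * I (Ω.lam y) ≤ r0 * B0 * I M :=
    mul_le_mul_of_nonneg_left hIlam (by positivity)
  linarith
end
end

section
/- For every μ₀ > 0 there exists a constant k_infl > 0 such that if M_infl > N·k_infl, then the following is true: if Ω* = (μ*_infl, Λ*, X*) is a Nash equilibrium of the proxy game with Σ_{y∈C} μ*(y_infl|y) > 0, then there exists a producer z₀ ∈ C such that μ*_infl(z) ≥ μ₀ for all z ∈ C with z ≠ z₀. -/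
open scoped Classical

noncomputable section

variable (d : ℕ)

/-- Concavity increment comparison: for `I` concave on `[0,∞)` and `0 ≤ a ≤ m`,
the increment of `I` over `[a, a+m]` is at least the increment over `[m, 2m]`. -/
lemma concave_increment (I : ℝ → ℝ) (hI : ConcaveOn ℝ (Set.Ici 0) I) {a m : ℝ}
    (ha : 0 ≤ a) (ham : a ≤ m) (hm : 0 < m) :
    I (2*m) - I m ≤ I (a + m) - I a := by
  have hden : 0 < 2*m - a := by linarith
  set t := m / (2*m - a) with ht
  have hkey : t * (2*m - a) = m := div_mul_cancel₀ _ hden.ne'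
  have ht0 : 0 ≤ t := div_nonneg hm.le hden.le
  have ht1 : t ≤ 1 := (div_le_one hden).2 (by linarith)
  have h1t : 0 ≤ 1 - t := by linarith
  have hmem1 : a ∈ Set.Ici (0:ℝ) := ha
  have hmem2 : (2*m) ∈ Set.Ici (0:ℝ) := by simp only [Set.mem_Ici]; linarith
  have c1 := hI.2 hmem1 hmem2 ht0 h1t (by ring)
  have c2 := hI.2 hmem1 hmem2 h1t ht0 (by ring)
  simp only [smul_eq_mul] at c1 c2
  have e1 : t * a + (1-t) * (2*m) = m := by linear_combination -hkey
  have e2 : (1-t) * a + t * (2*m) = a + m := by linear_combination hkey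
  rw [e1] at c1
  rw [e2] at c2
  linarith [c1, c2]

set_option maxHeartbeats 1600000 in
/-- **Lemma 12.** For every `μ₀ > 0` there exists a constant
`k_infl > 0` such that if `M_infl > N·k_infl`, then the following is true: if
`Ω* = (μ*_infl, Λ*, X*)` is a Nash equilibrium of the proxy game with
`Σ_{y∈C} μ*(y_infl|y) > 0`, then there exists a producer `z₀ ∈ C` such that
`μ*_infl(z) ≥ μ₀` for all `z ∈ C` with `z ≠ z₀`. -/
theorem stmt16 (d : ℕ) (f g I : ℝ → ℝ)
    (hf_cont : ContinuousOn f (Set.Ici 0)) (hf_anti : StrictAntiOn f (Set.Ici 0))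
    (hf_rng : ∀ t ∈ Set.Ici (0 : ℝ), f t ∈ Set.Ioc (0 : ℝ) 1)
    (hg_cont : ContinuousOn g (Set.Ici 0)) (hg_anti : StrictAntiOn g (Set.Ici 0))
    (hg_rng : ∀ t ∈ Set.Ici (0 : ℝ), g t ∈ Set.Ioc (0 : ℝ) 1)
    (hI_diff : ContDiffOn ℝ 1 I (Set.Ici 0))
    (hI_mono : StrictMonoOn I (Set.Ici 0))
    (hI_conc : StrictConcaveOn ℝ (Set.Ici 0) I)
    (hI_zero : I 0 = 0)
    (hI_lim : Filter.Tendsto I Filter.atTop (nhds 1))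
    (T : Set (E d)) (hT_ne : T.Nonempty) (hT_conv : Convex ℝ T) (hT_comp : IsCompact T)
    (rp r0 B0 : ℝ) (hrp : 0 < rp) (hr0 : 0 < r0) (hB0 : 0 < B0)
    (M : ℝ) (hM : 0 < M)
    (μ₀ : ℝ) (hμ₀ : 0 < μ₀) :
    ∃ kinfl : ℝ, 0 < kinfl ∧
      ∀ C : Finset (E d), ↑C ⊆ T →
        ∀ Minfl : ℝ, (C.card : ℝ) * kinfl < Minfl →
          ∀ Ω : Alloc d, NashProxy d f g I T C rp r0 B0 Minfl M Ω →
            (0 < ∑ y ∈ C, Ω.muY y) →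
            ∃ z₀ ∈ C, ∀ z ∈ C, z ≠ z₀ → μ₀ ≤ Ω.muI z := by
  classical
  have hD0 : (0:ℝ) ≤ Metric.diam T := Metric.diam_nonneg
  set D := Metric.diam T with hD
  obtain ⟨hfD, hfD1⟩ := hf_rng D hD0
  obtain ⟨hgD, hgD1⟩ := hg_rng D hD0
  set c := g D * f D with hc
  have hc0 : 0 < c := mul_pos hgD hfD
  have hδpos : 0 < I (2*μ₀) - I μ₀ :=
    sub_pos.2 (hI_mono hμ₀.le (by simp only [Set.mem_Ici]; linarith) (by linarith))
  set δ := I (2*μ₀) - I μ₀ with hδdef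
  have hε0 : 0 < c/2 * δ := by positivity
  have hev : ∀ᶠ t in Filter.atTop, 1 - c/2*δ < I t :=
    hI_lim.eventually (eventually_gt_nhds (by linarith))
  obtain ⟨K, hK⟩ := Filter.eventually_atTop.1 hev
  set kinfl := max (2*μ₀) (K + μ₀) with hkdef
  have h2k : 2*μ₀ ≤ kinfl := le_max_left _ _
  have hKk : K + μ₀ ≤ kinfl := le_max_right _ _
  have hkpos : 0 < kinfl := lt_of_lt_of_le (by linarith) h2k
  refine ⟨kinfl, hkpos, ?_⟩
  intro C hCT Minfl hMinfl Ω hNash hS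
  obtain ⟨⟨⟨hmuI0, hbud, hcons, hXT⟩, hmu0⟩, hIBR, hConsBR, hProdBR⟩ := hNash
  -- basic facts about I
  have hImono := hI_mono.monotoneOn
  have hI0 : ∀ t : ℝ, 0 ≤ t → 0 ≤ I t := by
    intro t ht
    have := hImono Set.self_mem_Ici ht ht
    rwa [hI_zero] at this
  have hI1 : ∀ t : ℝ, 0 ≤ t → I t ≤ 1 := by
    intro t ht
    refine ge_of_tendsto hI_lim ?_
    filter_upwards [Filter.eventually_ge_atTop t] with s hs
    exact hImono ht (le_trans ht hs) hs
  -- C is nonempty; pick the consumer y0 with maximal muY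
  have hCne : C.Nonempty := by
    rcases C.eq_empty_or_nonempty with h | h
    · subst h; simp at hS
    · exact h
  have hmuY0 : ∀ y ∈ C, 0 ≤ Ω.muY y := fun y hy => (hcons y hy).2.1
  obtain ⟨y0, hy0C, hy0max⟩ := Finset.exists_max_image C Ω.muY hCne
  have hy0pos : 0 < Ω.muY y0 := by
    by_contra h
    push_neg at h
    have : ∑ y ∈ C, Ω.muY y ≤ 0 :=
      Finset.sum_nonpos fun y hy => le_trans (hy0max y hy) h
    linarith
  -- bounds on Bfun
  have hBpos : ∀ z y : E d, 0 < Bfun d f g Ω z y := fun z y =>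
    mul_pos (hg_rng _ dist_nonneg).1 (hf_rng _ dist_nonneg).1
  have hBle : ∀ z y : E d, Bfun d f g Ω z y ≤ 1 := fun z y =>
    mul_le_one₀ (hg_rng _ dist_nonneg).2 (hf_rng _ dist_nonneg).1.le (hf_rng _ dist_nonneg).2
  have hBge : ∀ z ∈ C, ∀ y ∈ C, c ≤ Bfun d f g Ω z y := by
    intro z hz y hy
    have hd1 : dist (Ω.X z) z ≤ D :=
      Metric.dist_le_diam_of_mem hT_comp.isBounded (hXT z hz) (hCT hz)
    have hd2 : dist (Ω.X z) y ≤ D :=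
      Metric.dist_le_diam_of_mem hT_comp.isBounded (hXT z hz) (hCT hy)
    exact mul_le_mul (hg_anti.antitoneOn dist_nonneg hD0 hd1)
      (hf_anti.antitoneOn dist_nonneg hD0 hd2) hfD.le
      (hg_rng _ dist_nonneg).1.le
  -- key quantities
  set A : E d → ℝ := fun z => ∑ y ∈ C.erase z, Bfun d f g Ω z y * I (Ω.muY y) with hA
  set S := ∑ y ∈ C, I (Ω.muY y) with hSdef
  have htermnn : ∀ z : E d, ∀ y ∈ C.erase z, 0 ≤ Bfun d f g Ω z y * I (Ω.muY y) :=
    fun z y hy => mul_nonneg (hBpos z y).le (hI0 _ (hmuY0 y (Finset.mem_of_mem_erase hy)))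
  have hs0pos : 0 < I (Ω.muY y0) := by
    have := hI_mono Set.self_mem_Ici (hmuY0 y0 hy0C) hy0pos
    rwa [hI_zero] at this
  have hSpos : 0 < S :=
    lt_of_lt_of_le hs0pos (Finset.single_le_sum (fun y hy => hI0 _ (hmuY0 y hy)) hy0C)
  have hAub : ∀ z : E d, A z ≤ S := by
    intro z
    calc A z ≤ ∑ y ∈ C.erase z, I (Ω.muY y) :=
          Finset.sum_le_sum fun y hy =>
            mul_le_of_le_one_left (hI0 _ (hmuY0 y (Finset.mem_of_mem_erase hy))) (hBle z y)
      _ ≤ S := Finset.sum_le_sum_of_subset_of_nonneg (Finset.erase_subset _ _)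
          (fun y hy _ => hI0 _ (hmuY0 y hy))
  have hAlow : ∀ z ∈ C, z ≠ y0 → c * (S/2) ≤ A z := by
    intro z hz hzne
    have hy0e : y0 ∈ C.erase z := Finset.mem_erase.2 ⟨fun h => hzne h.symm, hy0C⟩
    have h1 : c * I (Ω.muY y0) ≤ A z :=
      le_trans (mul_le_mul_of_nonneg_right (hBge z hz y0 hy0C) hs0pos.le)
        (Finset.single_le_sum (htermnn z) hy0e)
    have h2 : c * (S - I (Ω.muY y0)) ≤ A z := by
      have h3 : ∑ y ∈ C.erase z, c * I (Ω.muY y) ≤ A z :=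
        Finset.sum_le_sum fun y hy =>
          mul_le_mul_of_nonneg_right (hBge z hz y (Finset.mem_of_mem_erase hy))
            (hI0 _ (hmuY0 y (Finset.mem_of_mem_erase hy)))
      rw [← Finset.mul_sum, Finset.sum_erase_eq_sub hz, ← hSdef] at h3
      have hle : I (Ω.muY z) ≤ I (Ω.muY y0) :=
        hImono (hmuY0 z hz) (hmuY0 y0 hy0C) (hy0max z hz)
      calc c * (S - I (Ω.muY y0)) ≤ c * (S - I (Ω.muY z)) :=
            mul_le_mul_of_nonneg_left (by linarith) hc0.le
        _ ≤ A z := h3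
    rcases le_total (I (Ω.muY y0)) (S/2) with h | h
    · calc c * (S/2) ≤ c * (S - I (Ω.muY y0)) :=
            mul_le_mul_of_nonneg_left (by linarith) hc0.le
        _ ≤ A z := h2
    · calc c * (S/2) ≤ c * I (Ω.muY y0) :=
            mul_le_mul_of_nonneg_left (by linarith) hc0.le
        _ ≤ A z := h1
  -- rewriting the influencer utility
  have hUeq : ∀ v : E d → ℝ,
      Uinfl d f g I C rp { Ω with muI := v } = rp * ∑ z ∈ C, A z * I (v z) := by
    intro v
    simp only [Uinfl]
    congr 1
    refine Finset.sum_congr rfl fun z hz => ?_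
    simp only [hA]
    rw [Finset.sum_mul]
    refine Finset.sum_congr rfl fun y hy => ?_
    show Bfun d f g { Ω with muI := v } z y * I (v z) * I (Ω.muY y)
       = Bfun d f g Ω z y * I (Ω.muY y) * I (v z)
    have hBeq : Bfun d f g { Ω with muI := v } z y = Bfun d f g Ω z y := rfl
    rw [hBeq]; ring
  have hUΩ : Uinfl d f g I C rp Ω = rp * ∑ z ∈ C, A z * I (Ω.muI z) := hUeq Ω.muI
  -- main argument
  refine ⟨y0, hy0C, ?_⟩
  intro z1 hz1C hz1ne
  by_contra hlt
  push_neg at hlt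
  have hm1 : 0 ≤ Ω.muI z1 := hmuI0 z1 hz1C
  have hAz1 : c * (S/2) ≤ A z1 := hAlow z1 hz1C hz1ne
  have hAz1pos : 0 < A z1 := lt_of_lt_of_le (by positivity) hAz1
  -- the influencer uses its full budget
  have hfull : ∑ z ∈ C, Ω.muI z = Minfl := by
    by_contra hne
    have hlt2 : ∑ z ∈ C, Ω.muI z < Minfl := lt_of_le_of_ne hbud hne
    set ε := Minfl - ∑ z ∈ C, Ω.muI z with hε
    have hεpos : 0 < ε := by rw [hε]; linarith
    set v := Function.update Ω.muI z1 (Ω.muI z1 + ε) with hv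
    have hvnn : ∀ z ∈ C, 0 ≤ v z := by
      intro z hz
      rcases eq_or_ne z z1 with rfl | hne'
      · rw [hv, Function.update_self]; linarith
      · rw [hv, Function.update_of_ne hne']; exact hmuI0 z hz
    have hvsum : ∑ z ∈ C, v z ≤ Minfl := by
      have d1 : ∑ z ∈ C, v z = v z1 + ∑ z ∈ C.erase z1, v z :=
        (Finset.add_sum_erase C v hz1C).symm
      have d2 : ∑ z ∈ C.erase z1, v z = ∑ z ∈ C.erase z1, Ω.muI z :=
        Finset.sum_congr rfl fun z hz => by
          rw [hv, Function.update_of_ne (Finset.mem_erase.1 hz).1]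
      have d3 := Finset.add_sum_erase C Ω.muI hz1C
      have hvz1' : v z1 = Ω.muI z1 + ε := by rw [hv, Function.update_self]
      rw [d1, d2, hvz1', hε]; linarith
    have hBR := hIBR v hvnn hvsum
    rw [hUeq v, hUΩ] at hBR
    have hsum : ∑ z ∈ C, A z * I (v z) ≤ ∑ z ∈ C, A z * I (Ω.muI z) :=
      le_of_mul_le_mul_left hBR hrp
    have e1 : ∑ z ∈ C, A z * I (v z)
        = A z1 * I (v z1) + ∑ z ∈ C.erase z1, A z * I (v z) :=
      (Finset.add_sum_erase C (fun z => A z * I (v z)) hz1C).symm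
    have e2 : ∑ z ∈ C, A z * I (Ω.muI z)
        = A z1 * I (Ω.muI z1) + ∑ z ∈ C.erase z1, A z * I (Ω.muI z) :=
      (Finset.add_sum_erase C (fun z => A z * I (Ω.muI z)) hz1C).symm
    have e3 : ∑ z ∈ C.erase z1, A z * I (v z) = ∑ z ∈ C.erase z1, A z * I (Ω.muI z) := by
      refine Finset.sum_congr rfl fun z hz => ?_
      rw [hv, Function.update_of_ne (Finset.mem_erase.1 hz).1]
    have hvz1 : v z1 = Ω.muI z1 + ε := by rw [hv, Function.update_self]
    rw [e1, e2, e3, hvz1] at hsum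
    have hstrict : I (Ω.muI z1) < I (Ω.muI z1 + ε) :=
      hI_mono hm1 (by simp only [Set.mem_Ici]; linarith) (by linarith)
    have hmul := mul_lt_mul_of_pos_left hstrict hAz1pos
    linarith
  -- there is a producer z2 with a large rate
  have hNpos : 0 < (C.card : ℝ) := by exact_mod_cast Finset.card_pos.2 hCne
  obtain ⟨z2, hz2C, hz2big⟩ : ∃ z2 ∈ C, Minfl / C.card ≤ Ω.muI z2 := by
    by_contra h
    push_neg at h
    have h1 : ∑ z ∈ C, Ω.muI z < ∑ _z ∈ C, Minfl / (C.card : ℝ) :=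
      Finset.sum_lt_sum_of_nonempty hCne fun z hz => h z hz
    rw [Finset.sum_const, nsmul_eq_mul, mul_div_cancel₀ _ hNpos.ne'] at h1
    linarith [hfull]
  have hkM : kinfl < Minfl / (C.card : ℝ) := by
    rw [lt_div_iff₀ hNpos, mul_comm]
    exact hMinfl
  have hm2big : kinfl < Ω.muI z2 := lt_of_lt_of_le hkM hz2big
  have hz12 : z1 ≠ z2 := by
    intro h
    rw [← h] at hm2big
    linarith
  -- the deviation: transfer μ₀ from z2 to z1
  set w := Function.update (Function.update Ω.muI z1 (Ω.muI z1 + μ₀)) z2 (Ω.muI z2 - μ₀)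
    with hw
  have hwz1 : w z1 = Ω.muI z1 + μ₀ := by
    rw [hw, Function.update_of_ne hz12, Function.update_self]
  have hwz2 : w z2 = Ω.muI z2 - μ₀ := by rw [hw, Function.update_self]
  have hwnn : ∀ z ∈ C, 0 ≤ w z := by
    intro z hz
    rcases eq_or_ne z z2 with rfl | hne2
    · rw [hwz2]; linarith
    · rcases eq_or_ne z z1 with rfl | hne1
      · rw [hwz1]; linarith
      · rw [hw, Function.update_of_ne hne2, Function.update_of_ne hne1]
        exact hmuI0 z hz
  have hz2e : z2 ∈ C.erase z1 := Finset.mem_erase.2 ⟨fun h => hz12 h.symm, hz2C⟩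
  have hdec : ∀ F : E d → ℝ,
      ∑ z ∈ C, F z = F z1 + (F z2 + ∑ z ∈ (C.erase z1).erase z2, F z) := by
    intro F
    rw [← Finset.add_sum_erase _ F hz1C, ← Finset.add_sum_erase _ F hz2e]
  have hrestw : ∀ z ∈ (C.erase z1).erase z2, w z = Ω.muI z := by
    intro z hz
    have h1 : z ≠ z2 := (Finset.mem_erase.1 hz).1
    have h2 : z ≠ z1 := (Finset.mem_erase.1 (Finset.mem_of_mem_erase hz)).1
    rw [hw, Function.update_of_ne h1, Function.update_of_ne h2]
  have hwsum : ∑ z ∈ C, w z ≤ Minfl := by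
    have d1 : ∑ z ∈ C, w z = w z1 + (w z2 + ∑ z ∈ (C.erase z1).erase z2, w z) := hdec w
    have d2 : ∑ z ∈ C, Ω.muI z
        = Ω.muI z1 + (Ω.muI z2 + ∑ z ∈ (C.erase z1).erase z2, Ω.muI z) := hdec Ω.muI
    have d3 : ∑ z ∈ (C.erase z1).erase z2, w z = ∑ z ∈ (C.erase z1).erase z2, Ω.muI z :=
      Finset.sum_congr rfl hrestw
    rw [d1, d3, hwz1, hwz2]
    linarith [hfull, d2]
  -- apply influencer best response
  have hBR := hIBR w hwnn hwsum
  rw [hUeq w, hUΩ] at hBR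
  have hsum : ∑ z ∈ C, A z * I (w z) ≤ ∑ z ∈ C, A z * I (Ω.muI z) :=
    le_of_mul_le_mul_left hBR hrp
  have d1 : ∑ z ∈ C, A z * I (w z)
      = A z1 * I (w z1) + (A z2 * I (w z2) + ∑ z ∈ (C.erase z1).erase z2, A z * I (w z)) :=
    hdec _
  have d2 : ∑ z ∈ C, A z * I (Ω.muI z)
      = A z1 * I (Ω.muI z1) +
        (A z2 * I (Ω.muI z2) + ∑ z ∈ (C.erase z1).erase z2, A z * I (Ω.muI z)) :=
    hdec _
  have d3 : ∑ z ∈ (C.erase z1).erase z2, A z * I (w z)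
      = ∑ z ∈ (C.erase z1).erase z2, A z * I (Ω.muI z) :=
    Finset.sum_congr rfl fun z hz => by rw [hrestw z hz]
  rw [d1, d2, d3, hwz1, hwz2] at hsum
  have hkey : A z1 * I (Ω.muI z1 + μ₀) + A z2 * I (Ω.muI z2 - μ₀)
      ≤ A z1 * I (Ω.muI z1) + A z2 * I (Ω.muI z2) := by linarith
  -- the numeric contradiction
  have hinc1 : δ ≤ I (Ω.muI z1 + μ₀) - I (Ω.muI z1) := by
    have h := concave_increment I hI_conc.concaveOn hm1 hlt.le hμ₀
    rw [hδdef]; linarith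
  have hm2K : K ≤ Ω.muI z2 - μ₀ := by linarith
  have hI2 : 1 - c/2*δ < I (Ω.muI z2 - μ₀) := hK _ hm2K
  have hIm2 : I (Ω.muI z2) ≤ 1 := hI1 _ (by linarith)
  have hImono2 : I (Ω.muI z2 - μ₀) ≤ I (Ω.muI z2) :=
    hImono (by simp only [Set.mem_Ici]; linarith) (by simp only [Set.mem_Ici]; linarith)
      (by linarith)
  have hAz2ub : A z2 ≤ S := hAub z2
  have hinc2nn : 0 ≤ I (Ω.muI z2) - I (Ω.muI z2 - μ₀) := by linarith
  have c1 : c * (S/2) * δ ≤ A z1 * (I (Ω.muI z1 + μ₀) - I (Ω.muI z1)) :=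
    mul_le_mul hAz1 hinc1 hδpos.le hAz1pos.le
  have c2 : A z2 * (I (Ω.muI z2) - I (Ω.muI z2 - μ₀))
      ≤ S * (I (Ω.muI z2) - I (Ω.muI z2 - μ₀)) :=
    mul_le_mul_of_nonneg_right hAz2ub hinc2nn
  have c3 : S * (I (Ω.muI z2) - I (Ω.muI z2 - μ₀)) < S * (c/2*δ) := by
    apply mul_lt_mul_of_pos_left _ hSpos
    linarith
  have hkey2 : A z1 * (I (Ω.muI z1 + μ₀) - I (Ω.muI z1))
      ≤ A z2 * (I (Ω.muI z2) - I (Ω.muI z2 - μ₀)) := by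
    rw [mul_sub, mul_sub]; linarith
  have hchain : c * (S/2) * δ < S * (c/2*δ) :=
    lt_of_le_of_lt (le_trans c1 (le_trans hkey2 c2)) c3
  have heq : c * (S/2) * δ = S * (c/2*δ) := by ring
  linarith
end
end

section
/- Let M be a given consumer rate budget. There exist a positive integer N₀ and constants k_infl > 0 and ε₀ > 0 such that if N > N₀ and M_infl > N·k_infl, then the following is true: if Ω* = (μ*_infl, Λ*, X*) is a Nash equilibrium of the proxy game (with the tie-break convention that if Σ_{y∈C} μ*(y_infl|y) = 0 then μ*_infl(z) = M_infl/N for all z), then every consumer follows the influencer with rate μ*(y_infl|y) > ε₀ for all y ∈ C. -/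
open scoped Classical

noncomputable section

variable (d : ℕ)

/-!
Every benefit `B(z|y)` lies between `c = g (diam T) * f (diam T)` and `1`. Comparing the
influencer's rates with the uniform split `M_infl / N > 1` (or using the tie-break rule when
nobody follows the influencer) gives `∑_z I (μ_infl z) ≥ c I(1) (N - 1)`, so for large `N` each
consumer's benefit `∑_{z ≠ y} I (μ_infl z) B(z|y)` from following the influencer is large. Since
outside sources are worth at most `r0 B0`, such a consumer with `I (μ(y_infl|y)) < I (M/2) / 2`
would gain by splitting the budget evenly; and by continuity of `I` at `0` some `ε₀ > 0` has
`I ε₀ < I (M/2) / 2`.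
-/

open Set Finset

variable {d}

lemma le_one_of_tendsto_atTop {I : ℝ → ℝ} (hI : MonotoneOn I (Ici 0))
    (hI_lim : Filter.Tendsto I Filter.atTop (nhds 1)) {t : ℝ} (ht : 0 ≤ t) : I t ≤ 1 :=
  ge_of_tendsto hI_lim <| Filter.eventually_atTop.2
    ⟨t, fun _ hs => hI (mem_Ici.2 ht) (mem_Ici.2 (ht.trans hs)) hs⟩

lemma MonotoneOn.nonneg_of_map_zero {I : ℝ → ℝ} (hI : MonotoneOn I (Ici 0)) (h0 : I 0 = 0)
    {t : ℝ} (ht : 0 ≤ t) : 0 ≤ I t :=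
  h0 ▸ hI self_mem_Ici (mem_Ici.2 ht) ht

lemma StrictMonoOn.pos_of_map_zero {I : ℝ → ℝ} (hI : StrictMonoOn I (Ici 0)) (h0 : I 0 = 0)
    {t : ℝ} (ht : 0 < t) : 0 < I t :=
  h0 ▸ hI self_mem_Ici (mem_Ici.2 ht.le) ht

lemma exists_pos_lt_of_continuousWithinAt {I : ℝ → ℝ} (hI : ContinuousWithinAt I (Ici 0) 0)
    {a : ℝ} (ha : I 0 < a) : ∃ ε > 0, I ε < a := by
  have hlt : ∀ᶠ t in nhdsWithin 0 (Ioi 0), I t < a :=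
    (hI.eventually (gt_mem_nhds ha)).filter_mono (nhdsWithin_mono _ Set.Ioi_subset_Ici_self)
  exact ((eventually_mem_nhdsWithin (a := (0 : ℝ)) (s := Ioi 0)).and hlt).exists

lemma mul_sub_le_sum_erase_mul {ι : Type*} [DecidableEq ι] {C : Finset ι} {w v : ι → ℝ}
    {c : ℝ} {x : ι} (hx : x ∈ C) (hw : ∀ i ∈ C, c ≤ w i) (hv : ∀ i ∈ C, 0 ≤ v i) :
    c * (∑ i ∈ C, v i - v x) ≤ ∑ i ∈ C.erase x, w i * v i := by
  rw [← sum_erase_eq_sub hx, mul_sum]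
  exact sum_le_sum fun i hi =>
    mul_le_mul_of_nonneg_right (hw i (mem_of_mem_erase hi)) (hv i (mem_of_mem_erase hi))

lemma sum_erase_mul_le_sum {ι : Type*} [DecidableEq ι] {C : Finset ι} {w v : ι → ℝ}
    {x : ι} (hw : ∀ i ∈ C, w i ≤ 1) (hv : ∀ i ∈ C, 0 ≤ v i) :
    ∑ i ∈ C.erase x, w i * v i ≤ ∑ i ∈ C, v i :=
  calc ∑ i ∈ C.erase x, w i * v i ≤ ∑ i ∈ C.erase x, v i :=
        sum_le_sum fun i hi =>
          mul_le_of_le_one_left (hv i (mem_of_mem_erase hi)) (hw i (mem_of_mem_erase hi))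
    _ ≤ ∑ i ∈ C, v i := sum_le_sum_of_subset_of_nonneg (erase_subset x C) fun i hi _ => hv i hi

-- Each `z` carries weight at least `c` times all but one of the `b y`, and at most all of them.
lemma mul_card_sub_one_le_sum_of_weighted_le {ι : Type*} [DecidableEq ι] {C : Finset ι}
    {B : ι → ι → ℝ} {a b : ι → ℝ} {c u : ℝ}
    (hB : ∀ z ∈ C, ∀ y ∈ C, c ≤ B z y ∧ B z y ≤ 1) (ha : ∀ z ∈ C, 0 ≤ a z)
    (hb : ∀ y ∈ C, 0 ≤ b y) (hb_pos : 0 < ∑ y ∈ C, b y) (hu : 0 ≤ u)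
    (h : ∑ z ∈ C, ∑ y ∈ C.erase z, B z y * u * b y ≤
      ∑ z ∈ C, ∑ y ∈ C.erase z, B z y * a z * b y) :
    c * u * (C.card - 1) ≤ ∑ z ∈ C, a z := by
  set A := ∑ y ∈ C, b y
  have regroup : ∀ v : ι → ℝ, ∑ z ∈ C, ∑ y ∈ C.erase z, B z y * v z * b y =
      ∑ z ∈ C, v z * ∑ y ∈ C.erase z, B z y * b y := fun v =>
    sum_congr rfl fun z _ => by rw [mul_sum]; exact sum_congr rfl fun y _ => by ring
  have lower : c * u * (C.card - 1) * A ≤ ∑ z ∈ C, u * ∑ y ∈ C.erase z, B z y * b y := by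
    calc c * u * (C.card - 1) * A = u * ∑ z ∈ C, c * (A - b z) := by
          rw [← mul_sum, sum_sub_distrib, sum_const, nsmul_eq_mul]; ring
      _ ≤ u * ∑ z ∈ C, ∑ y ∈ C.erase z, B z y * b y := by
          gcongr with z hz
          exact mul_sub_le_sum_erase_mul hz (fun y hy => (hB z hz y hy).1) hb
      _ = _ := mul_sum _ _ _
  have upper : ∑ z ∈ C, a z * ∑ y ∈ C.erase z, B z y * b y ≤ (∑ z ∈ C, a z) * A := by
    rw [sum_mul]
    gcongr with z hz
    · exact ha z hz
    · exact sum_erase_mul_le_sum (fun y hy => (hB z hz y hy).2) hb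
  have := lower.trans ((regroup fun _ => u).symm.trans_le (h.trans ((regroup a).trans_le upper)))
  exact le_of_mul_le_mul_right this hb_pos

lemma Bfun_mem_Icc {f g : ℝ → ℝ} (hf_anti : AntitoneOn f (Ici 0))
    (hf_rng : ∀ t ∈ Ici (0 : ℝ), f t ∈ Ioc (0 : ℝ) 1) (hg_anti : AntitoneOn g (Ici 0))
    (hg_rng : ∀ t ∈ Ici (0 : ℝ), g t ∈ Ioc (0 : ℝ) 1) {T : Set (E d)}
    (hT : Bornology.IsBounded T) {Ω : Alloc d} {z y : E d} (hXz : Ω.X z ∈ T) (hz : z ∈ T)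
    (hy : y ∈ T) :
    Bfun d f g Ω z y ∈ Icc (g (Metric.diam T) * f (Metric.diam T)) 1 := by
  have hdiam : Metric.diam T ∈ Set.Ici 0 := Metric.diam_nonneg
  have hfz := hf_rng _ (mem_Ici.2 (dist_nonneg (x := Ω.X z) (y := y)))
  have hgz := hg_rng _ (mem_Ici.2 (dist_nonneg (x := Ω.X z) (y := z)))
  refine ⟨mul_le_mul ?_ ?_ (hf_rng _ hdiam).1.le hgz.1.le, mul_le_one₀ hgz.2 hfz.1.le hfz.2⟩
  · exact hg_anti (mem_Ici.2 dist_nonneg) hdiam (Metric.dist_le_diam_of_mem hT hXz hz)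
  · exact hf_anti (mem_Ici.2 dist_nonneg) hdiam (Metric.dist_le_diam_of_mem hT hXz hy)

/-- `∑_{z ≠ y} I (μ_infl z) B(z|y)`, the coefficient of `I (μ(y_infl|y))` in the proxy-game
utility of consumer `y`. -/
def proxyBenefit (f g I : ℝ → ℝ) (C : Finset (E d)) (Ω : Alloc d) (y : E d) : ℝ :=
  ∑ z ∈ C.erase y, Bfun d f g Ω z y * I (Ω.muI z)

lemma Uc_eq_of_mu_eq_zero {f g I : ℝ → ℝ} (hI_zero : I 0 = 0) {C : Finset (E d)}
    {rp r0 B0 : ℝ} {Ω : Alloc d} {y : E d} (hmu : ∀ z ∈ C.erase y, Ω.mu z y = 0) :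
    Uc d f g I C rp r0 B0 Ω y =
      rp * proxyBenefit f g I C Ω y * I (Ω.muY y) + r0 * B0 * I (Ω.lam y) := by
  have hdirect : ∑ z ∈ C.erase y, Bfun d f g Ω z y * I (Ω.mu z y) = 0 :=
    sum_eq_zero fun z hz => by rw [hmu z hz, hI_zero, mul_zero]
  rw [Uc, hdirect, mul_zero, add_zero, proxyBenefit, mul_sum, mul_sum, sum_mul]
  exact congrArg (· + _) (sum_congr rfl fun z _ => by ring)

lemma Uc_consDeviate_zero {f g I : ℝ → ℝ} (hI_zero : I 0 = 0) (C : Finset (E d))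
    (rp r0 B0 : ℝ) (Ω : Alloc d) (y : E d) (muY' lam' : ℝ) :
    Uc d f g I C rp r0 B0 (consDeviate d Ω y (fun _ => 0) muY' lam') y =
      rp * proxyBenefit f g I C Ω y * I muY' + r0 * B0 * I lam' := by
  rw [Uc_eq_of_mu_eq_zero hI_zero fun z _ => if_pos rfl]
  simp only [consDeviate, Function.update_self]
  rfl

-- Otherwise the even split `(M/2, M/2)` is a better response, as outside sources yield at
-- most `r0 B0`.
lemma ProxyConsBR.half_le_I_muY {f g I : ℝ → ℝ} (hI_mono : MonotoneOn I (Ici 0))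
    (hI_zero : I 0 = 0) (hI_le_one : ∀ t, 0 ≤ t → I t ≤ 1) {C : Finset (E d)}
    {rp r0 B0 M : ℝ} (hr0 : 0 < r0) (hB0 : 0 < B0) (hM : 0 < M) {Ω : Alloc d} {y : E d}
    (hBR : ProxyConsBR d f g I C rp r0 B0 M Ω y) (hmu : ∀ z ∈ C.erase y, Ω.mu z y = 0)
    (hlam : 0 ≤ Ω.lam y) (hbenefit : 2 * (r0 * B0) ≤ rp * proxyBenefit f g I C Ω y * I (M / 2)) :
    I (M / 2) / 2 ≤ I (Ω.muY y) := by
  have hdev := hBR (M / 2) (M / 2) (by positivity) (by positivity) (by linarith)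
  rw [Uc_consDeviate_zero hI_zero, Uc_eq_of_mu_eq_zero hI_zero hmu] at hdev
  have hIM : 0 ≤ I (M / 2) := hI_mono.nonneg_of_map_zero hI_zero (by positivity)
  have hk : 0 < r0 * B0 := mul_pos hr0 hB0
  have hP : 0 < rp * proxyBenefit f g I C Ω y := pos_of_mul_pos_left (by linarith) hIM
  refine le_of_mul_le_mul_left ?_ hP
  nlinarith [hI_le_one _ hlam]

lemma InflBR.mul_card_sub_one_le_sum_I_muI {f g I : ℝ → ℝ} (hI_mono : StrictMonoOn I (Ici 0))
    (hI_zero : I 0 = 0) {C : Finset (E d)} (hC : C.Nonempty) {rp Minfl c : ℝ} (hrp : 0 < rp)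
    (hMinfl : 0 ≤ Minfl) {Ω : Alloc d}
    (hB : ∀ z ∈ C, ∀ y ∈ C, c ≤ Bfun d f g Ω z y ∧ Bfun d f g Ω z y ≤ 1)
    (hmuI : ∀ z ∈ C, 0 ≤ Ω.muI z) (hmuY : ∀ y ∈ C, 0 ≤ Ω.muY y)
    (hBR : InflBR d f g I C rp Minfl Ω) (htie : TieBreak d C Minfl Ω) :
    c * I (Minfl / C.card) * (C.card - 1) ≤ ∑ z ∈ C, I (Ω.muI z) := by
  have hI_nonneg {t : ℝ} (ht : 0 ≤ t) : 0 ≤ I t := hI_mono.monotoneOn.nonneg_of_map_zero hI_zero ht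
  have hcard : (1 : ℝ) ≤ C.card := by exact_mod_cast hC.card_pos
  have hu : 0 ≤ I (Minfl / C.card) := hI_nonneg (by positivity)
  by_cases hfollow : ∑ y ∈ C, Ω.muY y = 0
  · obtain ⟨z, hz⟩ := hC
    have hc1 : c ≤ 1 := (hB z hz z hz).1.trans (hB z hz z hz).2
    rw [sum_congr rfl fun z hz => by rw [htie hfollow z hz], sum_const, nsmul_eq_mul]
    nlinarith [mul_nonneg (mul_nonneg (sub_nonneg.2 hc1) hu) (sub_nonneg.2 hcard)]
  · have hpos : 0 < ∑ y ∈ C, I (Ω.muY y) := by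
      obtain ⟨y, hy, hy0⟩ := exists_ne_zero_of_sum_ne_zero hfollow
      refine sum_pos' (fun y hy => hI_nonneg (hmuY y hy)) ⟨y, hy, ?_⟩
      exact hI_mono.pos_of_map_zero hI_zero ((hmuY y hy).lt_of_ne' hy0)
    have huniform := hBR (fun _ => Minfl / C.card) (fun _ _ => by positivity) (by
      rw [sum_const, nsmul_eq_mul, mul_div_cancel₀ _ (by positivity)])
    exact mul_card_sub_one_le_sum_of_weighted_le hB (fun z hz => hI_nonneg (hmuI z hz))
      (fun y hy => hI_nonneg (hmuY y hy)) hpos hu (le_of_mul_le_mul_left huniform hrp)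

lemma mul_sum_sub_one_le_proxyBenefit {f g I : ℝ → ℝ} {C : Finset (E d)} {Ω : Alloc d}
    {c : ℝ} (hc : 0 ≤ c) {y : E d} (hy : y ∈ C) (hB : ∀ z ∈ C, c ≤ Bfun d f g Ω z y)
    (hI : ∀ z ∈ C, 0 ≤ I (Ω.muI z)) (hIy : I (Ω.muI y) ≤ 1) :
    c * (∑ z ∈ C, I (Ω.muI z) - 1) ≤ proxyBenefit f g I C Ω y :=
  (mul_le_mul_of_nonneg_left (by linarith) hc).trans (mul_sub_le_sum_erase_mul hy hB hI)

lemma exists_nat_le_mul_sub_one {a b : ℝ} (ha : 0 < a) (hb : 0 < b) (r : ℝ) :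
    ∃ N₀ : ℕ, ∀ N : ℕ, N₀ < N → r ≤ a * (b * (N - 1) - 1) := by
  have hlim : Filter.Tendsto (fun N : ℕ => a * (b * ((N : ℝ) - 1) - 1)) Filter.atTop
      Filter.atTop :=
    (((tendsto_natCast_atTop_atTop.atTop_add tendsto_const_nhds).const_mul_atTop hb).atTop_add
      tendsto_const_nhds).const_mul_atTop ha
  obtain ⟨N₀, hN₀⟩ := Filter.eventually_atTop.1 (hlim.eventually_ge_atTop r)
  exact ⟨N₀, fun N hN => hN₀ N hN.le⟩

lemma NashProxy.mul_sub_one_le_proxyBenefit {f g I : ℝ → ℝ}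
    (hI_mono : StrictMonoOn I (Ici 0)) (hI_zero : I 0 = 0)
    (hI_le_one : ∀ t, 0 ≤ t → I t ≤ 1) {T : Set (E d)} {C : Finset (E d)} (hC : C.Nonempty)
    {rp r0 B0 Minfl M c : ℝ} (hrp : 0 < rp) (hc : 0 ≤ c) (hMinfl : (C.card : ℝ) < Minfl)
    {Ω : Alloc d} (hB : ∀ z ∈ C, ∀ y ∈ C, c ≤ Bfun d f g Ω z y ∧ Bfun d f g Ω z y ≤ 1)
    (hNash : NashProxy d f g I T C rp r0 B0 Minfl M Ω) (htie : TieBreak d C Minfl Ω)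
    {y : E d} (hy : y ∈ C) :
    c * (c * I 1 * (C.card - 1) - 1) ≤ proxyBenefit f g I C Ω y := by
  obtain ⟨⟨⟨hmuI, -, hcons, -⟩, -⟩, hinfl, -, -⟩ := hNash
  have hcard : (1 : ℝ) ≤ C.card := by exact_mod_cast hC.card_pos
  have hIu : I 1 ≤ I (Minfl / C.card) := hI_mono.monotoneOn (mem_Ici.2 zero_le_one)
    (mem_Ici.2 (div_nonneg (by linarith) (by positivity)))
    ((one_le_div (by positivity)).2 hMinfl.le)
  calc c * (c * I 1 * (C.card - 1) - 1)
      ≤ c * (c * I (Minfl / C.card) * (C.card - 1) - 1) := by gcongr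
    _ ≤ c * (∑ z ∈ C, I (Ω.muI z) - 1) := by
      gcongr
      exact hinfl.mul_card_sub_one_le_sum_I_muI hI_mono hI_zero hC hrp (by linarith) hB hmuI
        (fun y hy => (hcons y hy).2.1) htie
    _ ≤ proxyBenefit f g I C Ω y :=
      mul_sum_sub_one_le_proxyBenefit hc hy (fun z hz => (hB z hz y hy).1)
        (fun z hz => hI_mono.monotoneOn.nonneg_of_map_zero hI_zero (hmuI z hz))
        (hI_le_one _ (hmuI y hy))

theorem stmt17_general (d : ℕ) (f g I : ℝ → ℝ)
    (hf_anti : StrictAntiOn f (Set.Ici 0))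
    (hf_rng : ∀ t ∈ Set.Ici (0 : ℝ), f t ∈ Set.Ioc (0 : ℝ) 1)
    (hg_anti : StrictAntiOn g (Set.Ici 0))
    (hg_rng : ∀ t ∈ Set.Ici (0 : ℝ), g t ∈ Set.Ioc (0 : ℝ) 1)
    (hI_diff : ContDiffOn ℝ 1 I (Set.Ici 0))
    (hI_mono : StrictMonoOn I (Set.Ici 0))
    (hI_zero : I 0 = 0)
    (hI_lim : Filter.Tendsto I Filter.atTop (nhds 1))
    (T : Set (E d)) (hT_comp : IsCompact T)
    (rp r0 B0 : ℝ) (hrp : 0 < rp) (hr0 : 0 < r0) (hB0 : 0 < B0)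
    (M : ℝ) (hM : 0 < M) :
    ∃ (N₀ : ℕ) (kinfl ε₀ : ℝ), 0 < kinfl ∧ 0 < ε₀ ∧
      ∀ C : Finset (E d), ↑C ⊆ T → N₀ < C.card →
        ∀ Minfl : ℝ, (C.card : ℝ) * kinfl < Minfl →
          ∀ Ω : Alloc d, NashProxy d f g I T C rp r0 B0 Minfl M Ω →
            TieBreak d C Minfl Ω →
            ∀ y ∈ C, ε₀ < Ω.muY y := by
  have hI_le_one := fun t => le_one_of_tendsto_atTop (t := t) hI_mono.monotoneOn hI_lim
  have hIM : 0 < I (M / 2) := hI_mono.pos_of_map_zero hI_zero (by positivity)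
  obtain ⟨ε₀, hε₀, hIε₀⟩ := exists_pos_lt_of_continuousWithinAt
    (hI_diff.continuousOn 0 self_mem_Ici) (a := I (M / 2) / 2) (by rw [hI_zero]; positivity)
  set c := g (Metric.diam T) * f (Metric.diam T)
  have hc : 0 < c := mul_pos (hg_rng _ Metric.diam_nonneg).1 (hf_rng _ Metric.diam_nonneg).1
  -- The threshold is the benefit required by `ProxyConsBR.half_le_I_muY`.
  obtain ⟨N₀, hN₀⟩ := exists_nat_le_mul_sub_one hc (mul_pos hc (hI_mono.pos_of_map_zero hI_zero
    one_pos)) (2 * (r0 * B0) / (rp * I (M / 2)))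
  refine ⟨N₀, 1, ε₀, one_pos, hε₀, fun C hCT hN Minfl hMinfl Ω hNash htie y hy => ?_⟩
  have hB : ∀ z ∈ C, ∀ y ∈ C, c ≤ Bfun d f g Ω z y ∧ Bfun d f g Ω z y ≤ 1 := fun z hz y hy =>
    Bfun_mem_Icc hf_anti.antitoneOn hf_rng hg_anti.antitoneOn hg_rng hT_comp.isBounded
      (hNash.1.1.2.2.2 z hz) (hCT hz) (hCT hy)
  have hbenefit := (hN₀ _ hN).trans (hNash.mul_sub_one_le_proxyBenefit hI_mono hI_zero
    hI_le_one (card_pos.1 (by omega)) hrp hc.le (by linarith) hB htie hy)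
  obtain ⟨⟨⟨-, -, hcons, -⟩, hmu⟩, -, hBR, -⟩ := hNash
  have hIμ := (hBR y hy).half_le_I_muY hI_mono.monotoneOn hI_zero hI_le_one hr0 hB0 hM
    (hmu y hy) (hcons y hy).2.2.1 (by rw [div_le_iff₀ (by positivity)] at hbenefit; linarith)
  by_contra! hle
  exact (hIε₀.trans_le hIμ).not_ge
    (hI_mono.monotoneOn (mem_Ici.2 (hcons y hy).2.1) (mem_Ici.2 hε₀.le) hle)

/-- **Proposition 8.** Let `M` be a given consumer rate budget.
There exist a positive integer `N₀` and constants `k_infl > 0` and `ε₀ > 0`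
such that if `N > N₀` and `M_infl > N·k_infl`, then the following is true: if
`Ω* = (μ*_infl, Λ*, X*)` is a Nash equilibrium of the proxy game (with the
tie-break convention that if `Σ_{y∈C} μ*(y_infl|y) = 0` then
`μ*_infl(z) = M_infl/N` for all `z`), then every consumer follows the
influencer with rate `μ*(y_infl|y) > ε₀` for all `y ∈ C`. -/
theorem stmt17 (d : ℕ) (f g I : ℝ → ℝ)
    (hf_cont : ContinuousOn f (Set.Ici 0)) (hf_anti : StrictAntiOn f (Set.Ici 0))
    (hf_rng : ∀ t ∈ Set.Ici (0 : ℝ), f t ∈ Set.Ioc (0 : ℝ) 1)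
    (hg_cont : ContinuousOn g (Set.Ici 0)) (hg_anti : StrictAntiOn g (Set.Ici 0))
    (hg_rng : ∀ t ∈ Set.Ici (0 : ℝ), g t ∈ Set.Ioc (0 : ℝ) 1)
    (hI_diff : ContDiffOn ℝ 1 I (Set.Ici 0))
    (hI_mono : StrictMonoOn I (Set.Ici 0))
    (hI_conc : StrictConcaveOn ℝ (Set.Ici 0) I)
    (hI_zero : I 0 = 0)
    (hI_lim : Filter.Tendsto I Filter.atTop (nhds 1))
    (T : Set (E d)) (hT_ne : T.Nonempty) (hT_conv : Convex ℝ T) (hT_comp : IsCompact T)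
    (rp r0 B0 : ℝ) (hrp : 0 < rp) (hr0 : 0 < r0) (hB0 : 0 < B0)
    (M : ℝ) (hM : 0 < M) :
    ∃ (N₀ : ℕ) (kinfl ε₀ : ℝ), 0 < kinfl ∧ 0 < ε₀ ∧
      ∀ C : Finset (E d), ↑C ⊆ T → N₀ < C.card →
        ∀ Minfl : ℝ, (C.card : ℝ) * kinfl < Minfl →
          ∀ Ω : Alloc d, NashProxy d f g I T C rp r0 B0 Minfl M Ω →
            TieBreak d C Minfl Ω →
            ∀ y ∈ C, ε₀ < Ω.muY y :=
  stmt17_general d f g I hf_anti hf_rng hg_anti hg_rng hI_diff hI_mono hI_zero hI_lim T hT_comp rp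
    r0 B0 hrp hr0 hB0 M hM
end
end

section
/- Let M be a given consumer rate budget. There exist a positive integer N₀ and a constant k_infl > 0 such that if N > N₀ and M_infl > N·k_infl, then the following equivalence holds: an allocation Ω* = (μ*_infl, Λ*, X*) is a Nash equilibrium of the game with perfect information if and only if Ω* is a Nash equilibrium of the proxy game (in both games with the tie-break convention that if Σ_{y∈C} μ*(y_infl|y) = 0 then μ*_infl(z) = M_infl/N for all z). -/
open scoped Classical

noncomputable section

variable (d : ℕ)

/-!
Per unit of rate, following producers directly earns a consumer at most `c₀ = I'(0)`, since
`B ≤ 1` and `I t ≤ I'(0) t` by concavity; the same rate spent on the influencer earns at least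
`c₁ A_y`, where `c₁ > 0` bounds the slopes of `I` on `[0, M]` from below and
`A_y = ∑_{z ≠ y} B(z|y) I(μ_infl(z))` (`feedValue`). A best-responding influencer does at least
as well as the uniform split `M_infl / N > 1`; as `B ≥ B_min = g(diam T) f(diam T) > 0` on `T`,
this gives `∑_z I(μ_infl(z)) ≥ I(1) B_min (N - 1)`, so `A_y` grows linearly in `N`. Hence for
large `N` we have `c₁ A_y > c₀`: in an equilibrium of either game no consumer follows producers
directly, since redirecting that rate to the influencer is strictly better, and the consumer
best responses of the two games coincide.
-/

open Set Filter Topology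

theorem ConcaveOn.le_derivWithin_mul {I : ℝ → ℝ} (hconc : ConcaveOn ℝ (Ici 0) I)
    (hdiff : DifferentiableWithinAt ℝ I (Ici 0) 0) (hI0 : I 0 = 0) {t : ℝ} (ht : 0 ≤ t) :
    I t ≤ derivWithin I (Ici 0) 0 * t := by
  rcases ht.eq_or_lt with rfl | ht
  · simp [hI0]
  · have h := hconc.slope_le_derivWithin self_mem_Ici ht.le ht hdiff
    rwa [slope_def_field, hI0, sub_zero, sub_zero, div_le_iff₀ ht] at h

theorem ConcaveOn.slope_mul_le_sub {I : ℝ → ℝ} {S : Set ℝ} (hconc : ConcaveOn ℝ S I)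
    {x s a b : ℝ} (hx : x ∈ S) (hb : b ∈ S) (hs : 0 ≤ s) (ha : x + s ≤ a) (hab : a < b) :
    slope I a b * s ≤ I (x + s) - I x := by
  rcases hs.eq_or_lt with rfl | hs
  · simp
  have hmem : Icc x b ⊆ S := hconc.1.ordConnected.out hx hb
  have hslope_b : slope I a b ≤ slope I x b := by
    rw [slope_comm I a, slope_comm I x]
    exact hconc.slope_anti hb ⟨hx, (by linarith : x < b).ne⟩
      ⟨hmem ⟨by linarith, hab.le⟩, hab.ne⟩ (by linarith)
  have hslope_x : slope I x b ≤ slope I x (x + s) :=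
    hconc.slope_anti hx ⟨hmem ⟨by linarith, by linarith⟩, (by linarith : x < x + s).ne'⟩
      ⟨hb, (by linarith : x < b).ne'⟩ (by linarith)
  calc slope I a b * s ≤ slope I x (x + s) * s := by gcongr; exact hslope_b.trans hslope_x
    _ = I (x + s) - I x := by rw [slope_def_field, add_sub_cancel_left, div_mul_cancel₀ _ hs.ne']

theorem ConcaveOn.exists_pos_mul_le_sub {I : ℝ → ℝ} (hconc : ConcaveOn ℝ (Ici 0) I)
    (hmono : StrictMonoOn I (Ici 0)) {M : ℝ} (hM : 0 ≤ M) :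
    ∃ c > 0, ∀ x s, 0 ≤ x → 0 ≤ s → x + s ≤ M → c * s ≤ I (x + s) - I x := by
  have hM1 : M + 1 ∈ Ici (0 : ℝ) := mem_Ici.2 (by linarith)
  refine ⟨slope I M (M + 1), ?_, fun x s hx hs hxs =>
    hconc.slope_mul_le_sub (mem_Ici.2 hx) hM1 hs hxs (lt_add_one M)⟩
  rw [slope_def_field, add_sub_cancel_left, div_one, gt_iff_lt, sub_pos]
  exact hmono (mem_Ici.2 hM) hM1 (lt_add_one M)

theorem MonotoneOn.le_of_tendsto_atTop {φ : ℝ → ℝ} {a c t : ℝ} (hφ : MonotoneOn φ (Ici a))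
    (hlim : Tendsto φ atTop (𝓝 c)) (ht : a ≤ t) : φ t ≤ c :=
  ge_of_tendsto hlim ((eventually_ge_atTop t).mono fun _ hu => hφ ht (ht.trans hu) hu)

theorem exists_nat_forall_lt_mul_add {a : ℝ} (ha : 0 < a) (b c : ℝ) :
    ∃ N₀ : ℕ, ∀ n : ℕ, N₀ < n → c < a * n + b := by
  obtain ⟨N₀, hN₀⟩ := exists_nat_gt ((c - b) / a)
  refine ⟨N₀, fun n hn => ?_⟩
  have hn' : (N₀ : ℝ) < n := Nat.cast_lt.2 hn
  rw [div_lt_iff₀ ha] at hN₀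
  nlinarith

section

variable {d} {f g I : ℝ → ℝ} {T : Set (E d)} {C : Finset (E d)} {rp r0 B0 M Minfl : ℝ}
  {Ω : Alloc d}

def feedValue (d : ℕ) (f g I : ℝ → ℝ) (C : Finset (E d)) (Ω : Alloc d) (y : E d) : ℝ :=
  ∑ z ∈ C.erase y, Bfun d f g Ω z y * I (Ω.muI z)

def audience (d : ℕ) (f g I : ℝ → ℝ) (C : Finset (E d)) (Ω : Alloc d) (z : E d) : ℝ :=
  ∑ y ∈ C.erase z, Bfun d f g Ω z y * I (Ω.muY y)

theorem Uc_consDeviate (Ω : Alloc d) (y : E d) (mu' : E d → ℝ) (muY' lam' : ℝ) :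
    Uc d f g I C rp r0 B0 (consDeviate d Ω y mu' muY' lam') y =
      rp * (feedValue d f g I C Ω y * I muY') +
        rp * ∑ z ∈ C.erase y, Bfun d f g Ω z y * I (mu' z) + r0 * B0 * I lam' := by
  simp [Uc, consDeviate, feedValue, Bfun, Finset.sum_mul]

theorem consDeviate_self (Ω : Alloc d) (y : E d) :
    consDeviate d Ω y (fun z => Ω.mu z y) (Ω.muY y) (Ω.lam y) = Ω := by
  cases Ω
  simp only [consDeviate, Function.update_eq_self, Alloc.mk.injEq, true_and, and_true]
  funext z w
  split_ifs with h <;> simp [h]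

theorem Uinfl_eq_sum_audience (Ω : Alloc d) :
    Uinfl d f g I C rp Ω = rp * ∑ z ∈ C, audience d f g I C Ω z * I (Ω.muI z) := by
  simp only [Uinfl, audience, Finset.sum_mul, mul_right_comm]

theorem Bfun_mem_Icc_s19 (hf : ∀ t ∈ Ici (0 : ℝ), f t ∈ Ioc (0 : ℝ) 1)
    (hg : ∀ t ∈ Ici (0 : ℝ), g t ∈ Ioc (0 : ℝ) 1) (Ω : Alloc d) (z y : E d) :
    Bfun d f g Ω z y ∈ Icc 0 1 := by
  obtain ⟨hf0, hf1⟩ := hf (dist (Ω.X z) y) dist_nonneg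
  obtain ⟨hg0, hg1⟩ := hg (dist (Ω.X z) z) dist_nonneg
  exact ⟨by unfold Bfun; positivity, mul_le_one₀ hg1 hf0.le hf1⟩

theorem exists_pos_le_Bfun (hf : AntitoneOn f (Ici 0)) (hg : AntitoneOn g (Ici 0))
    (hf_rng : ∀ t ∈ Ici (0 : ℝ), f t ∈ Ioc (0 : ℝ) 1)
    (hg_rng : ∀ t ∈ Ici (0 : ℝ), g t ∈ Ioc (0 : ℝ) 1) (hT : Bornology.IsBounded T) :
    ∃ Bmin, 0 < Bmin ∧ Bmin ≤ 1 ∧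
      ∀ Ω : Alloc d, ∀ z ∈ T, ∀ y ∈ T, Ω.X z ∈ T → Bmin ≤ Bfun d f g Ω z y := by
  have hdiam : (0 : ℝ) ≤ Metric.diam T := Metric.diam_nonneg
  obtain ⟨hg0, hg1⟩ := hg_rng _ hdiam
  obtain ⟨hf0, hf1⟩ := hf_rng _ hdiam
  refine ⟨_, mul_pos hg0 hf0, mul_le_one₀ hg1 hf0.le hf1, fun Ω z hz y hy hX => ?_⟩
  exact mul_le_mul
    (hg dist_nonneg hdiam (Metric.dist_le_diam_of_mem hT hX hz))
    (hf dist_nonneg hdiam (Metric.dist_le_diam_of_mem hT hX hy))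
    hf0.le (hg_rng _ dist_nonneg).1.le

theorem sum_Bfun_mul_le {c₀ : ℝ} {y : E d} (hB : ∀ z, Bfun d f g Ω z y ∈ Icc 0 1)
    (hI : ∀ t, 0 ≤ t → 0 ≤ I t) (hlin : ∀ t, 0 ≤ t → I t ≤ c₀ * t) {mu' : E d → ℝ}
    (hmu' : ∀ z ∈ C.erase y, 0 ≤ mu' z) :
    ∑ z ∈ C.erase y, Bfun d f g Ω z y * I (mu' z) ≤ c₀ * ∑ z ∈ C.erase y, mu' z := by
  rw [Finset.mul_sum]
  refine Finset.sum_le_sum fun z hz => ?_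
  calc Bfun d f g Ω z y * I (mu' z) ≤ 1 * I (mu' z) :=
        mul_le_mul_of_nonneg_right (hB z).2 (hI _ (hmu' z hz))
    _ ≤ c₀ * mu' z := by rw [one_mul]; exact hlin _ (hmu' z hz)

theorem Uc_consDeviate_add_le_redirect {c₀ c₁ : ℝ} {y : E d} (hrp : 0 ≤ rp)
    (hB : ∀ z, Bfun d f g Ω z y ∈ Icc 0 1) (hI : ∀ t, 0 ≤ t → 0 ≤ I t) (hI0 : I 0 = 0)
    (hlin : ∀ t, 0 ≤ t → I t ≤ c₀ * t)
    (hinc : ∀ x s, 0 ≤ x → 0 ≤ s → x + s ≤ M → c₁ * s ≤ I (x + s) - I x)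
    (hA : 0 ≤ feedValue d f g I C Ω y) {mu' : E d → ℝ} {muY' : ℝ} (lam' : ℝ)
    (hmu' : ∀ z ∈ C.erase y, 0 ≤ mu' z) (hmuY' : 0 ≤ muY')
    (hbud : muY' + ∑ z ∈ C.erase y, mu' z ≤ M) :
    Uc d f g I C rp r0 B0 (consDeviate d Ω y mu' muY' lam') y +
        rp * ((c₁ * feedValue d f g I C Ω y - c₀) * ∑ z ∈ C.erase y, mu' z) ≤
      Uc d f g I C rp r0 B0
        (consDeviate d Ω y (fun _ => 0) (muY' + ∑ z ∈ C.erase y, mu' z) lam') y := by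
  set s := ∑ z ∈ C.erase y, mu' z
  have hs : 0 ≤ s := Finset.sum_nonneg hmu'
  have hdirect := sum_Bfun_mul_le (C := C) hB hI hlin hmu'
  have hgain : feedValue d f g I C Ω y * (c₁ * s) ≤
      feedValue d f g I C Ω y * (I (muY' + s) - I muY') :=
    mul_le_mul_of_nonneg_left (hinc _ _ hmuY' hs hbud) hA
  rw [Uc_consDeviate, Uc_consDeviate]
  simp only [hI0, mul_zero, Finset.sum_const_zero, add_zero]
  nlinarith [mul_le_mul_of_nonneg_left hdirect hrp, mul_le_mul_of_nonneg_left hgain hrp]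

theorem feedValue_nonneg (hB : ∀ z y, Bfun d f g Ω z y ∈ Icc 0 1)
    (hI : ∀ t, 0 ≤ t → 0 ≤ I t) (hAdm : Admissible d T C Minfl M Ω) (y : E d) :
    0 ≤ feedValue d f g I C Ω y :=
  Finset.sum_nonneg fun z hz =>
    mul_nonneg (hB z y).1 (hI _ (hAdm.1 z (Finset.mem_of_mem_erase hz)))

theorem ConsBR.proxyConsBR {y : E d} (hBR : ConsBR d f g I C rp r0 B0 M Ω y) :
    ProxyConsBR d f g I C rp r0 B0 M Ω y := fun muY' lam' hmuY' hlam hbud =>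
  hBR _ muY' lam' (fun _ _ => le_rfl) hmuY' hlam (by rwa [Finset.sum_const_zero, zero_add])

theorem ConsBR.mu_eq_zero {c₀ c₁ : ℝ} {y : E d} (hBR : ConsBR d f g I C rp r0 B0 M Ω y)
    (hy : y ∈ C) (hAdm : Admissible d T C Minfl M Ω) (hrp : 0 < rp)
    (hB : ∀ z y, Bfun d f g Ω z y ∈ Icc 0 1) (hI : ∀ t, 0 ≤ t → 0 ≤ I t) (hI0 : I 0 = 0)
    (hlin : ∀ t, 0 ≤ t → I t ≤ c₀ * t)
    (hinc : ∀ x s, 0 ≤ x → 0 ≤ s → x + s ≤ M → c₁ * s ≤ I (x + s) - I x)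
    (hfeed : c₀ < c₁ * feedValue d f g I C Ω y) :
    ∀ z ∈ C.erase y, Ω.mu z y = 0 := by
  obtain ⟨hmu, hmuY, hlam, hbud⟩ := hAdm.2.2.1 y hy
  have hredirect := Uc_consDeviate_add_le_redirect (r0 := r0) (B0 := B0) hrp.le (hB · y) hI
    hI0 hlin hinc (feedValue_nonneg hB hI hAdm y) (Ω.lam y) hmu hmuY (by linarith)
  rw [consDeviate_self] at hredirect
  have hdev := hBR _ _ _ (fun _ _ => le_rfl) (add_nonneg hmuY (Finset.sum_nonneg hmu)) hlam
    (by rw [Finset.sum_const_zero]; linarith)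
  have hs : ∑ z ∈ C.erase y, Ω.mu z y ≤ 0 :=
    nonpos_of_mul_nonpos_right (by nlinarith) (mul_pos hrp (sub_pos.2 hfeed))
  exact (Finset.sum_eq_zero_iff_of_nonneg hmu).1 (le_antisymm hs (Finset.sum_nonneg hmu))

theorem ProxyConsBR.consBR {c₀ c₁ : ℝ} {y : E d} (hBR : ProxyConsBR d f g I C rp r0 B0 M Ω y)
    (hAdm : Admissible d T C Minfl M Ω) (hrp : 0 ≤ rp)
    (hB : ∀ z y, Bfun d f g Ω z y ∈ Icc 0 1) (hI : ∀ t, 0 ≤ t → 0 ≤ I t) (hI0 : I 0 = 0)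
    (hlin : ∀ t, 0 ≤ t → I t ≤ c₀ * t)
    (hinc : ∀ x s, 0 ≤ x → 0 ≤ s → x + s ≤ M → c₁ * s ≤ I (x + s) - I x)
    (hfeed : c₀ ≤ c₁ * feedValue d f g I C Ω y) :
    ConsBR d f g I C rp r0 B0 M Ω y := by
  intro mu' muY' lam' hmu' hmuY' hlam hbud
  have hs : 0 ≤ ∑ z ∈ C.erase y, mu' z := Finset.sum_nonneg hmu'
  have hredirect := Uc_consDeviate_add_le_redirect (r0 := r0) (B0 := B0) hrp (hB · y) hI
    hI0 hlin hinc (feedValue_nonneg hB hI hAdm y) lam' hmu' hmuY' (by linarith)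
  have hgain : 0 ≤ rp * ((c₁ * feedValue d f g I C Ω y - c₀) * ∑ z ∈ C.erase y, mu' z) :=
    mul_nonneg hrp (mul_nonneg (sub_nonneg.2 hfeed) hs)
  linarith [hBR _ lam' (add_nonneg hmuY' hs) hlam (by linarith)]

theorem nashPerfect_iff_nashProxy_of_lt_feedValue {c₀ c₁ : ℝ} (hrp : 0 < rp)
    (hB : ∀ z y, Bfun d f g Ω z y ∈ Icc 0 1) (hI : ∀ t, 0 ≤ t → 0 ≤ I t) (hI0 : I 0 = 0)
    (hlin : ∀ t, 0 ≤ t → I t ≤ c₀ * t)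
    (hinc : ∀ x s, 0 ≤ x → 0 ≤ s → x + s ≤ M → c₁ * s ≤ I (x + s) - I x)
    (hfeed : Admissible d T C Minfl M Ω → InflBR d f g I C rp Minfl Ω →
      ∀ y ∈ C, c₀ < c₁ * feedValue d f g I C Ω y) :
    NashPerfect d f g I T C rp r0 B0 Minfl M Ω ↔ NashProxy d f g I T C rp r0 B0 Minfl M Ω := by
  constructor
  · rintro ⟨hAdm, hBR, hCons, hProd⟩
    refine ⟨⟨hAdm, fun y hy => ?_⟩, hBR, fun y hy => (hCons y hy).proxyConsBR, hProd⟩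
    exact (hCons y hy).mu_eq_zero hy hAdm hrp hB hI hI0 hlin hinc (hfeed hAdm hBR y hy)
  · rintro ⟨⟨hAdm, -⟩, hBR, hCons, hProd⟩
    refine ⟨hAdm, hBR, fun y hy => ?_, hProd⟩
    exact (hCons y hy).consBR hAdm hrp.le hB hI hI0 hlin hinc (hfeed hAdm hBR y hy).le

theorem audience_le (hB : ∀ z y, Bfun d f g Ω z y ∈ Icc 0 1) (hI : ∀ t, 0 ≤ t → 0 ≤ I t)
    (hmuY : ∀ y ∈ C, 0 ≤ Ω.muY y) (z : E d) :
    audience d f g I C Ω z ≤ ∑ y ∈ C, I (Ω.muY y) :=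
  calc audience d f g I C Ω z ≤ ∑ y ∈ C.erase z, I (Ω.muY y) :=
        Finset.sum_le_sum fun y hy =>
          mul_le_of_le_one_left (hI _ (hmuY y (Finset.mem_of_mem_erase hy))) (hB z y).2
    _ ≤ ∑ y ∈ C, I (Ω.muY y) :=
        Finset.sum_le_sum_of_subset_of_nonneg (Finset.erase_subset z C)
          fun y hy _ => hI _ (hmuY y hy)

theorem audience_ge {Bmin : ℝ} {z : E d} (hz : z ∈ C) (hBmin : ∀ y ∈ C, Bmin ≤ Bfun d f g Ω z y)
    (hI : ∀ t, 0 ≤ t → 0 ≤ I t) (hmuY : ∀ y ∈ C, 0 ≤ Ω.muY y) :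
    Bmin * (∑ y ∈ C, I (Ω.muY y) - I (Ω.muY z)) ≤ audience d f g I C Ω z := by
  rw [← Finset.sum_erase_eq_sub hz, Finset.mul_sum]
  exact Finset.sum_le_sum fun y hy =>
    mul_le_mul_of_nonneg_right (hBmin y (Finset.mem_of_mem_erase hy))
      (hI _ (hmuY y (Finset.mem_of_mem_erase hy)))

theorem sum_audience_ge {Bmin : ℝ} (hBmin : ∀ z ∈ C, ∀ y ∈ C, Bmin ≤ Bfun d f g Ω z y)
    (hI : ∀ t, 0 ≤ t → 0 ≤ I t) (hmuY : ∀ y ∈ C, 0 ≤ Ω.muY y) :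
    Bmin * ((C.card - 1) * ∑ y ∈ C, I (Ω.muY y)) ≤ ∑ z ∈ C, audience d f g I C Ω z :=
  calc Bmin * ((C.card - 1) * ∑ y ∈ C, I (Ω.muY y))
        = ∑ z ∈ C, Bmin * (∑ y ∈ C, I (Ω.muY y) - I (Ω.muY z)) := by
          rw [← Finset.mul_sum, Finset.sum_sub_distrib, Finset.sum_const, nsmul_eq_mul]; ring
    _ ≤ ∑ z ∈ C, audience d f g I C Ω z :=
        Finset.sum_le_sum fun z hz => audience_ge hz (hBmin z hz) hI hmuY

theorem InflBR.mul_sum_audience_le (hBR : InflBR d f g I C rp Minfl Ω) (hrp : 0 < rp)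
    (hC : C.Nonempty) (hMinfl : 0 ≤ Minfl) :
    I (Minfl / C.card) * ∑ z ∈ C, audience d f g I C Ω z ≤
      ∑ z ∈ C, audience d f g I C Ω z * I (Ω.muI z) := by
  have hcard : (C.card : ℝ) ≠ 0 := Nat.cast_ne_zero.2 hC.card_pos.ne'
  have h := hBR (fun _ => Minfl / C.card) (fun _ _ => by positivity)
    (by rw [Finset.sum_const, nsmul_eq_mul, mul_div_cancel₀ _ hcard])
  rw [Uinfl_eq_sum_audience, Uinfl_eq_sum_audience] at h
  rw [Finset.mul_sum]
  refine le_trans (le_of_eq ?_) (le_of_mul_le_mul_left h hrp)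
  exact Finset.sum_congr rfl fun z _ => mul_comm _ _

/-- Outside the tie-break case, compare with the uniform split `Minfl / N`: the audiences sum
to at least `Bmin (N - 1)` times the total attention `∑ I (μ(y_infl|y)) > 0`, and none
exceeds it. -/
theorem InflBR.mul_card_le_sum {Bmin : ℝ} (hBR : InflBR d f g I C rp Minfl Ω)
    (hTB : TieBreak d C Minfl Ω) (hAdm : Admissible d T C Minfl M Ω) (hrp : 0 < rp)
    (hB : ∀ z y, Bfun d f g Ω z y ∈ Icc 0 1) (hBmin : ∀ z ∈ C, ∀ y ∈ C, Bmin ≤ Bfun d f g Ω z y)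
    (hBmin0 : 0 ≤ Bmin) (hBmin1 : Bmin ≤ 1) (hI : ∀ t, 0 ≤ t → 0 ≤ I t)
    (hIpos : ∀ t, 0 < t → 0 < I t) (hMinfl : 0 ≤ Minfl) :
    I (Minfl / C.card) * Bmin * (C.card - 1) ≤ ∑ z ∈ C, I (Ω.muI z) := by
  have hmuY : ∀ y ∈ C, 0 ≤ Ω.muY y := fun y hy => (hAdm.2.2.1 y hy).2.1
  have hu : 0 ≤ I (Minfl / C.card) := hI _ (by positivity)
  by_cases htie : ∑ y ∈ C, Ω.muY y = 0
  · rw [Finset.sum_congr rfl fun z hz => by rw [hTB htie z hz], Finset.sum_const, nsmul_eq_mul]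
    have hN : (0 : ℝ) ≤ C.card := Nat.cast_nonneg _
    nlinarith [mul_nonneg hu hBmin0, mul_nonneg (mul_nonneg hu hN) (sub_nonneg.2 hBmin1)]
  obtain ⟨y₀, hy₀, hy₀pos⟩ : ∃ y ∈ C, 0 < Ω.muY y := by
    by_contra! h
    exact htie (Finset.sum_eq_zero fun y hy => le_antisymm (h y hy) (hmuY y hy))
  set attention := ∑ y ∈ C, I (Ω.muY y)
  have hattention : 0 < attention :=
    Finset.sum_pos' (fun y hy => hI _ (hmuY y hy)) ⟨y₀, hy₀, hIpos _ hy₀pos⟩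
  refine le_of_mul_le_mul_right ?_ hattention
  calc I (Minfl / C.card) * Bmin * (C.card - 1) * attention
        = I (Minfl / C.card) * (Bmin * ((C.card - 1) * attention)) := by ring
    _ ≤ I (Minfl / C.card) * ∑ z ∈ C, audience d f g I C Ω z :=
        mul_le_mul_of_nonneg_left (sum_audience_ge hBmin hI hmuY) hu
    _ ≤ ∑ z ∈ C, audience d f g I C Ω z * I (Ω.muI z) :=
        hBR.mul_sum_audience_le hrp ⟨y₀, hy₀⟩ hMinfl
    _ ≤ (∑ z ∈ C, I (Ω.muI z)) * attention := by
        rw [Finset.sum_mul]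
        exact Finset.sum_le_sum fun z hz => by
          rw [mul_comm _ attention]
          exact mul_le_mul_of_nonneg_right (audience_le hB hI hmuY z) (hI _ (hAdm.1 z hz))

theorem feedValue_ge_of_le_Bfun {Bmin : ℝ} {y : E d} (hy : y ∈ C)
    (hBmin : ∀ z ∈ C, Bmin ≤ Bfun d f g Ω z y) (hBmin0 : 0 ≤ Bmin)
    (hI : ∀ t, 0 ≤ t → 0 ≤ I t) (hI1 : ∀ t, 0 ≤ t → I t ≤ 1) (hmuI : ∀ z ∈ C, 0 ≤ Ω.muI z) :
    Bmin * (∑ z ∈ C, I (Ω.muI z) - 1) ≤ feedValue d f g I C Ω y :=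
  calc Bmin * (∑ z ∈ C, I (Ω.muI z) - 1) ≤ Bmin * (∑ z ∈ C, I (Ω.muI z) - I (Ω.muI y)) :=
        mul_le_mul_of_nonneg_left (by linarith [hI1 _ (hmuI y hy)]) hBmin0
    _ = ∑ z ∈ C.erase y, Bmin * I (Ω.muI z) := by rw [← Finset.mul_sum, Finset.sum_erase_eq_sub hy]
    _ ≤ feedValue d f g I C Ω y :=
        Finset.sum_le_sum fun z hz =>
          mul_le_mul_of_nonneg_right (hBmin z (Finset.mem_of_mem_erase hz))
            (hI _ (hmuI z (Finset.mem_of_mem_erase hz)))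

theorem InflBR.feedValue_ge {Bmin : ℝ} {y : E d} (hBR : InflBR d f g I C rp Minfl Ω)
    (hTB : TieBreak d C Minfl Ω) (hAdm : Admissible d T C Minfl M Ω) (hrp : 0 < rp) (hy : y ∈ C)
    (hB : ∀ z y, Bfun d f g Ω z y ∈ Icc 0 1) (hBmin : ∀ z ∈ C, ∀ y ∈ C, Bmin ≤ Bfun d f g Ω z y)
    (hBmin0 : 0 ≤ Bmin) (hBmin1 : Bmin ≤ 1) (hI : ∀ t, 0 ≤ t → 0 ≤ I t)
    (hIpos : ∀ t, 0 < t → 0 < I t) (hI1 : ∀ t, 0 ≤ t → I t ≤ 1) (hMinfl : 0 ≤ Minfl)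
    (hIu : I 1 ≤ I (Minfl / C.card)) :
    Bmin * (I 1 * Bmin * (C.card - 1) - 1) ≤ feedValue d f g I C Ω y := by
  have hN : (1 : ℝ) ≤ C.card := Nat.one_le_cast.2 (Finset.card_pos.2 ⟨y, hy⟩)
  have hsum := hBR.mul_card_le_sum hTB hAdm hrp hB hBmin hBmin0 hBmin1 hI hIpos hMinfl
  have hscale : I 1 * Bmin * (C.card - 1) ≤ I (Minfl / C.card) * Bmin * (C.card - 1) :=
    mul_le_mul_of_nonneg_right (mul_le_mul_of_nonneg_right hIu hBmin0) (by linarith)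
  calc Bmin * (I 1 * Bmin * (C.card - 1) - 1) ≤ Bmin * (∑ z ∈ C, I (Ω.muI z) - 1) :=
        mul_le_mul_of_nonneg_left (by linarith) hBmin0
    _ ≤ feedValue d f g I C Ω y :=
        feedValue_ge_of_le_Bfun hy (fun z hz => hBmin z hz y hy) hBmin0 hI hI1 hAdm.1


theorem exists_forall_lt_mul_feedValue {c₀ c₁ Bmin : ℝ} (hc₁ : 0 < c₁) (hrp : 0 < rp)
    (hB : ∀ (Ω : Alloc d) z y, Bfun d f g Ω z y ∈ Icc 0 1) (hBmin0 : 0 < Bmin)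
    (hBmin1 : Bmin ≤ 1)
    (hBmin : ∀ Ω : Alloc d, ∀ z ∈ T, ∀ y ∈ T, Ω.X z ∈ T → Bmin ≤ Bfun d f g Ω z y)
    (hI : ∀ t, 0 ≤ t → 0 ≤ I t) (hIpos : ∀ t, 0 < t → 0 < I t) (hI1 : ∀ t, 0 ≤ t → I t ≤ 1)
    (hImono : MonotoneOn I (Ici 0)) :
    ∃ N₀ : ℕ, ∀ C : Finset (E d), ↑C ⊆ T → N₀ < C.card → ∀ Minfl : ℝ, (C.card : ℝ) < Minfl →
      ∀ Ω : Alloc d, TieBreak d C Minfl Ω → Admissible d T C Minfl M Ω →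
        InflBR d f g I C rp Minfl Ω → ∀ y ∈ C, c₀ < c₁ * feedValue d f g I C Ω y := by
  obtain ⟨N₀, hN₀⟩ := exists_nat_forall_lt_mul_add
    (mul_pos (mul_pos hc₁ (pow_pos hBmin0 2)) (hIpos 1 one_pos)) (-(c₁ * Bmin * (I 1 * Bmin + 1))) c₀
  refine ⟨N₀, fun C hCT hN Minfl hMinfl Ω hTB hAdm hBR y hy => ?_⟩
  have hN1 : (1 : ℝ) ≤ C.card := by exact_mod_cast Nat.one_le_of_lt hN
  have hu : 1 ≤ Minfl / C.card := by rw [le_div_iff₀ (by linarith)]; linarith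
  have hfeedValue := hBR.feedValue_ge hTB hAdm hrp hy (hB Ω)
    (fun z hz y hy => hBmin Ω z (hCT hz) y (hCT hy) (hAdm.2.2.2 z hz)) hBmin0.le hBmin1 hI
    hIpos hI1 (by linarith) (hImono (mem_Ici.2 zero_le_one) (mem_Ici.2 (by linarith)) hu)
  calc c₀ < c₁ * Bmin ^ 2 * I 1 * C.card + -(c₁ * Bmin * (I 1 * Bmin + 1)) := hN₀ _ hN
    _ = c₁ * (Bmin * (I 1 * Bmin * (C.card - 1) - 1)) := by ring
    _ ≤ c₁ * feedValue d f g I C Ω y := mul_le_mul_of_nonneg_left hfeedValue hc₁.le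

end

theorem stmt19_general (d : ℕ) (f g I : ℝ → ℝ)
    (hf_anti : StrictAntiOn f (Set.Ici 0))
    (hf_rng : ∀ t ∈ Set.Ici (0 : ℝ), f t ∈ Set.Ioc (0 : ℝ) 1)
    (hg_anti : StrictAntiOn g (Set.Ici 0))
    (hg_rng : ∀ t ∈ Set.Ici (0 : ℝ), g t ∈ Set.Ioc (0 : ℝ) 1)
    (hI_diff : ContDiffOn ℝ 1 I (Set.Ici 0))
    (hI_mono : StrictMonoOn I (Set.Ici 0))
    (hI_conc : StrictConcaveOn ℝ (Set.Ici 0) I)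
    (hI_zero : I 0 = 0)
    (hI_lim : Filter.Tendsto I Filter.atTop (nhds 1))
    (T : Set (E d)) (hT_comp : IsCompact T)
    (rp r0 B0 : ℝ) (hrp : 0 < rp)
    (M : ℝ) (hM : 0 < M) :
    ∃ (N₀ : ℕ) (kinfl : ℝ), 0 < kinfl ∧
      ∀ C : Finset (E d), ↑C ⊆ T → N₀ < C.card →
        ∀ Minfl : ℝ, (C.card : ℝ) * kinfl < Minfl →
          ∀ Ω : Alloc d, TieBreak d C Minfl Ω →
            (NashPerfect d f g I T C rp r0 B0 Minfl M Ω ↔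
              NashProxy d f g I T C rp r0 B0 Minfl M Ω) := by
  have hI : ∀ t, 0 ≤ t → 0 ≤ I t := fun t ht =>
    hI_zero ▸ hI_mono.monotoneOn self_mem_Ici ht ht
  have hIpos : ∀ t, 0 < t → 0 < I t := fun t ht => hI_zero ▸ hI_mono self_mem_Ici ht.le ht
  have hI1 : ∀ t, 0 ≤ t → I t ≤ 1 := fun t ht =>
    hI_mono.monotoneOn.le_of_tendsto_atTop hI_lim ht
  obtain ⟨c₀, hlin⟩ : ∃ c₀, ∀ t, 0 ≤ t → I t ≤ c₀ * t :=
    ⟨_, fun t ht => hI_conc.concaveOn.le_derivWithin_mul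
      (hI_diff.differentiableOn one_ne_zero 0 self_mem_Ici) hI_zero ht⟩
  obtain ⟨c₁, hc₁, hinc⟩ := hI_conc.concaveOn.exists_pos_mul_le_sub hI_mono hM.le
  have hB := Bfun_mem_Icc_s19 (d := d) hf_rng hg_rng
  obtain ⟨Bmin, hBmin0, hBmin1, hBmin⟩ := exists_pos_le_Bfun hf_anti.antitoneOn
    hg_anti.antitoneOn hf_rng hg_rng hT_comp.isBounded
  obtain ⟨N₀, hN₀⟩ := exists_forall_lt_mul_feedValue (c₀ := c₀) (M := M) hc₁ hrp hB hBmin0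
    hBmin1 hBmin hI hIpos hI1 hI_mono.monotoneOn
  refine ⟨N₀, 1, one_pos, fun C hCT hN Minfl hMinfl Ω hTB => ?_⟩
  rw [mul_one] at hMinfl
  exact nashPerfect_iff_nashProxy_of_lt_feedValue hrp (hB Ω) hI hI_zero hlin hinc
    (fun hAdm hBR => hN₀ C hCT hN Minfl hMinfl Ω hTB hAdm hBR)

/-- **Proposition 5.** Let `M` be a given consumer rate budget.
There exist a positive integer `N₀` and a constant `k_infl > 0` such that if
`N > N₀` and `M_infl > N·k_infl`, then the following equivalence holds: an
allocation `Ω* = (μ*_infl, Λ*, X*)` is a Nash equilibrium of the game with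
perfect information if and only if `Ω*` is a Nash equilibrium of the proxy
game (in both games with the tie-break convention that if
`Σ_{y∈C} μ*(y_infl|y) = 0` then `μ*_infl(z) = M_infl/N` for all `z`). -/
theorem stmt19 (d : ℕ) (f g I : ℝ → ℝ)
    (hf_cont : ContinuousOn f (Set.Ici 0)) (hf_anti : StrictAntiOn f (Set.Ici 0))
    (hf_rng : ∀ t ∈ Set.Ici (0 : ℝ), f t ∈ Set.Ioc (0 : ℝ) 1)
    (hg_cont : ContinuousOn g (Set.Ici 0)) (hg_anti : StrictAntiOn g (Set.Ici 0))
    (hg_rng : ∀ t ∈ Set.Ici (0 : ℝ), g t ∈ Set.Ioc (0 : ℝ) 1)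
    (hI_diff : ContDiffOn ℝ 1 I (Set.Ici 0))
    (hI_mono : StrictMonoOn I (Set.Ici 0))
    (hI_conc : StrictConcaveOn ℝ (Set.Ici 0) I)
    (hI_zero : I 0 = 0)
    (hI_lim : Filter.Tendsto I Filter.atTop (nhds 1))
    (T : Set (E d)) (hT_ne : T.Nonempty) (hT_conv : Convex ℝ T) (hT_comp : IsCompact T)
    (rp r0 B0 : ℝ) (hrp : 0 < rp) (hr0 : 0 < r0) (hB0 : 0 < B0)
    (M : ℝ) (hM : 0 < M) :
    ∃ (N₀ : ℕ) (kinfl : ℝ), 0 < kinfl ∧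
      ∀ C : Finset (E d), ↑C ⊆ T → N₀ < C.card →
        ∀ Minfl : ℝ, (C.card : ℝ) * kinfl < Minfl →
          ∀ Ω : Alloc d, TieBreak d C Minfl Ω →
            (NashPerfect d f g I T C rp r0 B0 Minfl M Ω ↔
              NashProxy d f g I T C rp r0 B0 Minfl M Ω) :=
  stmt19_general d f g I hf_anti hf_rng hg_anti hg_rng hI_diff hI_mono hI_conc hI_zero hI_lim T
    hT_comp rp r0 B0 hrp M hM
end
end
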